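/- arXiv:2212.05452 — 8 statements merged into one kernel-verified Lean document; each statement's English description precedes it below -/
import Mathlib

section
/- Let n ≥ 2. For every column index k ∈ {0, …, 2^n − 1}, let k₀ = k − (k mod 2) (the index with last bit cleared). Then the k-th column of P is an eigenvector of B with eigenvalue 4·W(k₀)·(n − W(k₀)); that is, for all i ∈ {0, …, 2^n − 1}, Σ_{j=0}^{2^n−1} B_{ij}·P_{jk} = 4·W(k₀)·(n − W(k₀))·P_{ik}. -/
/-!
Let `A` be the adjacency matrix of the `n`-cube, `D = diag(n - 2 W(i))` and `M = A - D`.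
Counting common neighbours gives `B = n² - M² / 2`.

Call `f : ℤ → ℝ` Pell-recurrent if `f (α + 1) = 2 f α + f (α - 1)`; `F` is. Let `P_f` be `P`
with `F` replaced by `f`. Flipping bit `p` of the row index `i` multiplies the sign
`(-1)^c(i₀,k₀)` by `(-1)^(bit p of k₀)` and moves the argument of `f` by `+1` or `-1` according
to whether bit `p` of `i` agrees with that of `k₀` (for `p = 0` the flip changes the parity bit
`a` instead of `i₀`). Summing over `p` with the recurrence yields `M P_f = P_g Λ`, where
`g α = f α + f (α - 1)` and `Λ = diag(n - 2 W(k₀))`. Since `g` is again Pell-recurrent with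
`g α + g (α - 1) = 2 f α`, we get `M² P = 2 P Λ²`, hence
`B P = P (n² - Λ²) = P diag(4 W(k₀) (n - W(k₀)))`.
-/

/-- Hamming weight: number of 1's in the `n`-bit binary representation of `i`. -/
def hamW (n i : ℕ) : ℕ := ((Finset.range n).filter (fun p => i.testBit p)).card

/-- Hamming distance between the `n`-bit binary representations of `i` and `j`. -/
def hamD (n i j : ℕ) : ℕ :=
  ((Finset.range n).filter (fun p => i.testBit p ≠ j.testBit p)).card

/-- Number of bit positions where `i` and `j` both have bit 1. -/
def hamC (n i j : ℕ) : ℕ :=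
  ((Finset.range n).filter (fun p => i.testBit p ∧ j.testBit p)).card

/-- `F α = ((1+√2)^α − (1−√2)^α)/(2√2)` with integer powers. -/
noncomputable def Ffun (α : ℤ) : ℝ :=
  ((1 + Real.sqrt 2) ^ α - (1 - Real.sqrt 2) ^ α) / (2 * Real.sqrt 2)

/-- The matrix `B`. -/
noncomputable def Bmat (n : ℕ) : Matrix (Fin (2 ^ n)) (Fin (2 ^ n)) ℝ := fun i j =>
  if i = j then
    (n : ℝ) * ((n : ℝ) - 1) + (1 / 2) * ((n : ℝ) - (2 * (hamW n i : ℝ) - (n : ℝ)) ^ 2)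
  else
    (if hamD n i j = 1 then (n : ℝ) - 1 - 2 * (min (hamW n i) (hamW n j) : ℝ) else 0)
      - (if hamD n i j = 2 then 1 else 0)

/-- The matrix `P`: writing `i = i₀ + a` and `k = k₀ + b` with `a b` the least significant
bits, `P i k = (−1)^(c(i₀,k₀)) * F(d(i₀,k₀) − 1 + a + b)`. -/
noncomputable def Pmat (n : ℕ) : Matrix (Fin (2 ^ n)) (Fin (2 ^ n)) ℝ := fun i k =>
  (-1 : ℝ) ^ hamC n ((i : ℕ) - (i : ℕ) % 2) ((k : ℕ) - (k : ℕ) % 2) *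
    Ffun ((hamD n ((i : ℕ) - (i : ℕ) % 2) ((k : ℕ) - (k : ℕ) % 2) : ℤ) - 1
      + (i : ℕ) % 2 + (k : ℕ) % 2)

open Finset

def PellRecurrent (f : ℤ → ℝ) : Prop := ∀ α, f (α + 1) = 2 * f α + f (α - 1)

namespace PellRecurrent

variable {f : ℤ → ℝ}

lemma add_shift (hf : PellRecurrent f) : PellRecurrent fun α => f α + f (α - 1) := by
  intro α
  have := hf (α - 1)
  simp only [sub_add_cancel, add_sub_cancel_right] at this ⊢
  linarith [hf α]

lemma add_shift_add_shift (hf : PellRecurrent f) (α : ℤ) :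
    f α + f (α - 1) + (f (α - 1) + f (α - 1 - 1)) = 2 * f α := by
  have := hf (α - 1)
  rw [sub_add_cancel] at this
  linarith

lemma apply_add_ite (hf : PellRecurrent f) (α : ℤ) (e : Prop) [Decidable e] :
    f (α + if e then 1 else -1) = f (α - 1) + if e then 2 * f α else 0 := by
  split_ifs
  · rw [hf α]; ring
  · simp [sub_eq_add_neg]

end PellRecurrent

lemma pellRecurrent_zpow {x : ℝ} (hx : x ^ 2 = 2 * x + 1) : PellRecurrent (x ^ ·) := by
  have hx0 : x ≠ 0 := by rintro rfl; norm_num at hx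
  intro α
  have h₂ : x ^ (α + 1) = x ^ (α - 1) * x ^ 2 := by
    rw [← zpow_natCast, ← zpow_add₀ hx0]; ring_nf
  have h₁ : x ^ α = x ^ (α - 1) * x := by
    rw [← zpow_add_one₀ hx0]; ring_nf
  simp only [h₂, h₁, hx]
  ring

lemma pellRecurrent_Ffun : PellRecurrent Ffun := by
  have hs : Real.sqrt 2 ^ 2 = 2 := Real.sq_sqrt (by norm_num)
  have h₁ := pellRecurrent_zpow (x := 1 + Real.sqrt 2) (by nlinarith)
  have h₂ := pellRecurrent_zpow (x := 1 - Real.sqrt 2) (by nlinarith)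
  intro α
  simp only [Ffun, h₁ α, h₂ α]
  ring

lemma testBit_sub_mod_two (x q : ℕ) :
    (x - x % 2).testBit q = (decide (q ≠ 0) && x.testBit q) := by
  rw [show x - x % 2 = 2 ^ 1 * (x / 2) by omega, Nat.testBit_two_pow_mul]
  rcases q with _ | q
  · simp
  · simp [Nat.testBit_div_two]

lemma xor_two_pow_mod_two {p : ℕ} (hp : p ≠ 0) (i : ℕ) : (i ^^^ 2 ^ p) % 2 = i % 2 := by
  rw [Nat.xor_mod_two_eq, Nat.add_mod, Nat.two_pow_mod_two_eq_zero.mpr (Nat.pos_of_ne_zero hp)]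
  simp

lemma xor_two_pow_sub_mod_two {p : ℕ} (hp : p ≠ 0) (i : ℕ) :
    (i ^^^ 2 ^ p) - (i ^^^ 2 ^ p) % 2 = (i - i % 2) ^^^ 2 ^ p := by
  apply Nat.eq_of_testBit_eq
  intro q
  simp only [testBit_sub_mod_two, Nat.testBit_xor, Nat.testBit_two_pow]
  by_cases hq : q = 0 <;> simp [hq, hp]

lemma xor_one_sub_mod_two (i : ℕ) : (i ^^^ 1) - (i ^^^ 1) % 2 = i - i % 2 := by
  apply Nat.eq_of_testBit_eq
  intro q
  have := Nat.testBit_two_pow (n := 0) (m := q)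
  simp only [testBit_sub_mod_two, Nat.testBit_xor, pow_zero] at this ⊢
  by_cases hq : q = 0 <;> simp [hq, this, Ne.symm]

section Hamming

variable {n : ℕ}

lemma natCast_card_filter_range_eq {p : ℕ} (hp : p < n) {P Q : ℕ → Prop} [DecidablePred P]
    [DecidablePred Q] (h : ∀ q, q ≠ p → (Q q ↔ P q)) :
    (#{q ∈ range n | Q q} : ℤ) =
      #{q ∈ range n | P q} + ((if Q p then 1 else 0) - if P p then 1 else 0) := by
  have hmem : p ∈ range n := mem_range.mpr hp
  have hrest : ∑ q ∈ (range n).erase p, (if Q q then 1 else 0 : ℤ) =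
      ∑ q ∈ (range n).erase p, (if P q then 1 else 0 : ℤ) :=
    sum_congr rfl fun q hq => by rw [if_congr (h q (ne_of_mem_erase hq)) rfl rfl]
  simp only [natCast_card_filter, ← add_sum_erase _ _ hmem, hrest]
  ring

lemma hamD_xor_two_pow {p : ℕ} (hp : p < n) (i j : ℕ) :
    (hamD n (i ^^^ 2 ^ p) j : ℤ) = hamD n i j + if i.testBit p = j.testBit p then 1 else -1 := by
  have h := natCast_card_filter_range_eq hp (P := fun q => i.testBit q ≠ j.testBit q)
    (Q := fun q => (i ^^^ 2 ^ p).testBit q ≠ j.testBit q)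
    (fun q hq => by simp [Ne.symm hq])
  rw [hamD, hamD, h]
  by_cases h : i.testBit p = j.testBit p <;> simp [h]

lemma hamW_xor_two_pow {p : ℕ} (hp : p < n) (i : ℕ) :
    (hamW n (i ^^^ 2 ^ p) : ℤ) = hamW n i + if i.testBit p then -1 else 1 := by
  have h := natCast_card_filter_range_eq hp (P := fun q => i.testBit q)
    (Q := fun q => (i ^^^ 2 ^ p).testBit q)
    (fun q hq => by simp [Ne.symm hq])
  rw [hamW, hamW, h]
  by_cases h : i.testBit p <;> simp [h]

lemma neg_one_pow_hamC_xor_two_pow {p : ℕ} (hp : p < n) (i j : ℕ) :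
    (-1 : ℝ) ^ hamC n (i ^^^ 2 ^ p) j = (if j.testBit p then -1 else 1) * (-1) ^ hamC n i j := by
  have h := natCast_card_filter_range_eq hp (P := fun q => i.testBit q ∧ j.testBit q)
    (Q := fun q => (i ^^^ 2 ^ p).testBit q ∧ j.testBit q)
    (fun q hq => by simp [Ne.symm hq])
  rw [← zpow_natCast, ← zpow_natCast, hamC, hamC, h, zpow_add₀ (by norm_num), mul_comm]
  cases hi : i.testBit p <;> cases j.testBit p <;> simp [hi]

lemma hamD_self (i : ℕ) : hamD n i i = 0 := by
  simp [hamD]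

lemma hamD_comm (i j : ℕ) : hamD n i j = hamD n j i := by
  simp only [hamD, ne_comm]

lemma hamD_xor_two_pow_self {p : ℕ} (hp : p < n) (i : ℕ) : hamD n i (i ^^^ 2 ^ p) = 1 := by
  have := hamD_xor_two_pow hp i i
  rw [hamD_self, if_pos rfl] at this
  rw [hamD_comm]
  omega

lemma eq_of_hamD_eq_zero {i j : ℕ} (hi : i < 2 ^ n) (hj : j < 2 ^ n) (h : hamD n i j = 0) :
    i = j := by
  refine Nat.eq_of_testBit_eq fun q => ?_
  by_cases hq : q < n
  · simp only [hamD, card_eq_zero, filter_eq_empty_iff, mem_range, not_not] at h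
    exact h hq
  · have hle : 2 ^ n ≤ 2 ^ q := Nat.pow_le_pow_right (by norm_num) (by omega)
    rw [Nat.testBit_lt_two_pow (by omega), Nat.testBit_lt_two_pow (by omega)]

lemma exists_eq_xor_of_hamD_eq_one {i j : ℕ} (hi : i < 2 ^ n) (hj : j < 2 ^ n)
    (h : hamD n i j = 1) : ∃ p < n, j = i ^^^ 2 ^ p := by
  obtain ⟨p, hp⟩ := card_pos.mp (h ▸ Nat.one_pos : 0 < hamD n i j)
  rw [mem_filter, mem_range] at hp
  refine ⟨p, hp.1, (eq_of_hamD_eq_zero ?_ hj ?_).symm⟩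
  · exact Nat.xor_lt_two_pow hi (Nat.pow_lt_pow_right (by norm_num) hp.1)
  · have := hamD_xor_two_pow hp.1 i j
    rw [if_neg hp.2] at this
    omega

lemma hamW_add_hamW_of_hamD_eq_one {i j : ℕ} (hi : i < 2 ^ n) (hj : j < 2 ^ n)
    (h : hamD n i j = 1) : hamW n i + hamW n j = 2 * min (hamW n i) (hamW n j) + 1 := by
  obtain ⟨p, hp, rfl⟩ := exists_eq_xor_of_hamD_eq_one hi hj h
  have := hamW_xor_two_pow hp i
  split_ifs at this <;> omega

lemma sum_range_ite_testBit (y : ℕ) :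
    ∑ p ∈ range n, (if y.testBit p then (-1 : ℝ) else 1) = n - 2 * hamW n y := by
  have h (p : ℕ) :
      (if y.testBit p then (-1 : ℝ) else 1) = 1 - 2 * if y.testBit p then 1 else 0 := by
    split_ifs <;> norm_num
  simp only [h, sum_sub_distrib, ← mul_sum, sum_boole, hamW]
  simp

lemma sum_range_ite_testBit_eq (x y : ℕ) :
    ∑ p ∈ range n,
        (if x.testBit p = y.testBit p then (if y.testBit p then (-1 : ℝ) else 1) else 0)
      = n - hamW n x - hamW n y := by
  have h (p : ℕ) :
      (if x.testBit p = y.testBit p then (if y.testBit p then (-1 : ℝ) else 1) else 0)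
        = 1 - (if x.testBit p then 1 else 0) - (if y.testBit p then 1 else 0) := by
    cases x.testBit p <;> cases y.testBit p <;> norm_num
  simp only [h, sum_sub_distrib, sum_boole, hamW]
  simp

lemma sum_range_ite_hamD_xor_eq_one (i j : ℕ) :
    ∑ p ∈ range n, (if hamD n (i ^^^ 2 ^ p) j = 1 then (1 : ℝ) else 0)
      = if hamD n i j = 0 then (n : ℝ) else if hamD n i j = 2 then 2 else 0 := by
  have h : ∀ p ∈ range n, (if hamD n (i ^^^ 2 ^ p) j = 1 then (1 : ℝ) else 0) =
      if hamD n i j = 0 then 1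
      else if hamD n i j = 2 ∧ i.testBit p ≠ j.testBit p then 1 else 0 := by
    intro p hp
    have hd := hamD_xor_two_pow (mem_range.mp hp) i j
    by_cases e : i.testBit p = j.testBit p <;> simp only [e, if_true, if_false] at hd <;>
      simp only [e, ne_eq, not_true, not_false_eq_true, and_false, and_true, if_false]
    · rw [if_congr (by omega : hamD n (i ^^^ 2 ^ p) j = 1 ↔ hamD n i j = 0) rfl rfl]
    · rw [if_congr (by omega : hamD n (i ^^^ 2 ^ p) j = 1 ↔ hamD n i j = 2) rfl rfl,
        if_neg (by omega : hamD n i j ≠ 0)]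
  rw [sum_congr rfl h]
  split_ifs with _ h2
  · simp
  · simp only [h2, true_and, sum_boole]
    exact_mod_cast h2
  · simp [h2]

lemma hamD_eq_zero_iff {i j : Fin (2 ^ n)} : hamD n i j = 0 ↔ i = j :=
  ⟨fun h => Fin.ext (eq_of_hamD_eq_zero i.isLt j.isLt h), fun h => h ▸ hamD_self _⟩

end Hamming

open Matrix

section Hypercube

variable (n : ℕ)

def hypercubeAdj : Matrix (Fin (2 ^ n)) (Fin (2 ^ n)) ℝ :=
  of fun i j => if hamD n i j = 1 then 1 else 0

def weightDiag : Matrix (Fin (2 ^ n)) (Fin (2 ^ n)) ℝ :=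
  diagonal fun i => (n : ℝ) - 2 * hamW n i

variable {n}

lemma hypercubeAdj_apply (i j : Fin (2 ^ n)) :
    hypercubeAdj n i j = if hamD n i j = 1 then 1 else 0 := rfl

lemma sum_hypercubeAdj_mul (w : ℕ → ℝ) (i : Fin (2 ^ n)) :
    ∑ j, hypercubeAdj n i j * w j = ∑ p ∈ range n, w (i ^^^ 2 ^ p) := by
  simp only [hypercubeAdj_apply]
  rw [Fin.sum_univ_eq_sum_range (fun j => (if hamD n i j = 1 then 1 else 0) * w j)]
  simp only [ite_mul, one_mul, zero_mul, ← sum_filter]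
  have himage :
      {j ∈ range (2 ^ n) | hamD n i j = 1} = (range n).image ((i : ℕ) ^^^ 2 ^ ·) := by
    ext j
    simp only [mem_filter, mem_range, mem_image]
    constructor
    · rintro ⟨hj, hd⟩
      obtain ⟨p, hp, rfl⟩ := exists_eq_xor_of_hamD_eq_one i.isLt hj hd
      exact ⟨p, hp, rfl⟩
    · rintro ⟨p, hp, rfl⟩
      refine ⟨Nat.xor_lt_two_pow i.isLt (Nat.pow_lt_pow_right (by norm_num) hp), ?_⟩
      exact hamD_xor_two_pow_self hp i
  rw [himage, sum_image]
  intro p _ q _ hpq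
  simpa using hpq

lemma hypercubeAdj_mul_self_apply (i j : Fin (2 ^ n)) :
    (hypercubeAdj n * hypercubeAdj n) i j =
      if i = j then (n : ℝ) else if hamD n i j = 2 then 2 else 0 := by
  have h := sum_hypercubeAdj_mul (fun l => if hamD n l j = 1 then (1 : ℝ) else 0) i
  simp only [hypercubeAdj_apply] at h
  rw [mul_apply]
  simp only [hypercubeAdj_apply]
  rw [h, sum_range_ite_hamD_xor_eq_one, if_congr hamD_eq_zero_iff rfl rfl]

lemma Bmat_eq : Bmat n = (n ^ 2 : ℝ) • 1 - (1 / 2 : ℝ) •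
    ((hypercubeAdj n - weightDiag n) * (hypercubeAdj n - weightDiag n)) := by
  have hsq : (hypercubeAdj n - weightDiag n) * (hypercubeAdj n - weightDiag n) =
      hypercubeAdj n * hypercubeAdj n - hypercubeAdj n * weightDiag n -
        weightDiag n * hypercubeAdj n + weightDiag n * weightDiag n := by
    noncomm_ring
  rw [hsq]
  ext i j
  simp only [Matrix.sub_apply, Matrix.add_apply, Matrix.smul_apply, one_apply,
    hypercubeAdj_mul_self_apply, weightDiag, mul_diagonal, diagonal_mul, diagonal_mul_diagonal,
    diagonal_apply, hypercubeAdj_apply, Bmat]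
  by_cases hij : i = j
  · subst hij
    simp only [hamD_self, if_true, zero_ne_one, if_false, smul_eq_mul]
    ring
  · simp only [hij, if_false, smul_eq_mul]
    by_cases h1 : hamD n i j = 1
    · have hW := hamW_add_hamW_of_hamD_eq_one i.isLt j.isLt h1
      rw [← Nat.cast_min]
      have hW' : (hamW n i : ℝ) + hamW n j = 2 * (min (hamW n i) (hamW n j) : ℕ) + 1 := by
        exact_mod_cast hW
      simp only [h1, if_true, show (1 : ℕ) ≠ 2 by norm_num, if_false]
      linarith
    · by_cases h2 : hamD n i j = 2 <;> simp [h1, h2]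

end Hypercube

section PColumns

variable {n : ℕ}

def pSign (n i k : ℕ) : ℝ := (-1) ^ hamC n (i - i % 2) (k - k % 2)

def pIndex (n i k : ℕ) : ℤ := (hamD n (i - i % 2) (k - k % 2) : ℤ) - 1 + i % 2 + k % 2

lemma pSign_xor_two_pow {p : ℕ} (hp : p < n) (i k : ℕ) :
    pSign n (i ^^^ 2 ^ p) k = (if (k - k % 2).testBit p then -1 else 1) * pSign n i k := by
  rcases eq_or_ne p 0 with rfl | hp0
  · rw [pSign, pSign, pow_zero, xor_one_sub_mod_two, testBit_sub_mod_two]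
    simp
  · rw [pSign, xor_two_pow_sub_mod_two hp0, neg_one_pow_hamC_xor_two_pow hp, pSign]

lemma pIndex_xor_two_pow {p : ℕ} (hp : p < n) (i k : ℕ) :
    pIndex n (i ^^^ 2 ^ p) k =
      pIndex n i k + if i.testBit p = (k - k % 2).testBit p then 1 else -1 := by
  rcases eq_or_ne p 0 with rfl | hp0
  · have h : (i ^^^ 1) % 2 = (i + 1) % 2 := Nat.xor_mod_two_eq
    rw [pIndex, pIndex, pow_zero, xor_one_sub_mod_two, testBit_sub_mod_two]
    simp only [Nat.testBit_zero, ne_eq, not_true_eq_false, decide_false, Bool.false_and,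
      decide_eq_false_iff_not]
    split_ifs <;> omega
  · have h := xor_two_pow_mod_two hp0 i
    rw [pIndex, pIndex, xor_two_pow_sub_mod_two hp0, hamD_xor_two_pow hp, testBit_sub_mod_two i p]
    simp only [hp0, ne_eq, not_false_eq_true, decide_true, Bool.true_and]
    omega

lemma sum_xor_two_pow_sub_weight_mul {f : ℤ → ℝ} (hf : PellRecurrent f) (i k : ℕ) :
    ∑ p ∈ range n, pSign n (i ^^^ 2 ^ p) k * f (pIndex n (i ^^^ 2 ^ p) k)
        - ((n : ℝ) - 2 * hamW n i) * (pSign n i k * f (pIndex n i k))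
      = ((n : ℝ) - 2 * hamW n (k - k % 2)) *
          (pSign n i k * (f (pIndex n i k) + f (pIndex n i k - 1))) := by
  set k₀ := k - k % 2
  have hterm : ∀ p ∈ range n, pSign n (i ^^^ 2 ^ p) k * f (pIndex n (i ^^^ 2 ^ p) k) =
      pSign n i k * f (pIndex n i k - 1) * (if k₀.testBit p then -1 else 1) +
        pSign n i k * (2 * f (pIndex n i k)) *
          (if i.testBit p = k₀.testBit p then (if k₀.testBit p then -1 else 1) else 0) := by
    intro p hp
    rw [pSign_xor_two_pow (mem_range.mp hp), pIndex_xor_two_pow (mem_range.mp hp),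
      hf.apply_add_ite]
    split_ifs <;> ring
  rw [sum_congr rfl hterm, sum_add_distrib, ← mul_sum, ← mul_sum, sum_range_ite_testBit,
    sum_range_ite_testBit_eq]
  ring

variable (n) in
def PmatOf (f : ℤ → ℝ) : Matrix (Fin (2 ^ n)) (Fin (2 ^ n)) ℝ :=
  of fun i k => pSign n i k * f (pIndex n i k)

lemma PmatOf_apply (f : ℤ → ℝ) (i k : Fin (2 ^ n)) :
    PmatOf n f i k = pSign n i k * f (pIndex n i k) := rfl

lemma hypercubeAdj_sub_weightDiag_mul_PmatOf {f : ℤ → ℝ} (hf : PellRecurrent f) :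
    (hypercubeAdj n - weightDiag n) * PmatOf n f =
      PmatOf n (fun α => f α + f (α - 1)) *
        diagonal fun k : Fin (2 ^ n) => (n : ℝ) - 2 * hamW n (k - k % 2) := by
  ext i k
  have h := sum_hypercubeAdj_mul (fun j => pSign n j k * f (pIndex n j k)) i
  rw [Matrix.sub_mul, Matrix.sub_apply, mul_apply, weightDiag, diagonal_mul, mul_diagonal]
  simp only [PmatOf_apply] at h ⊢
  rw [h, sum_xor_two_pow_sub_weight_mul hf, mul_comm]

end PColumns

lemma Pmat_eq_PmatOf (n : ℕ) : Pmat n = PmatOf n Ffun := rfl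

theorem Bmat_mul_Pmat (n : ℕ) :
    Bmat n * Pmat n = Pmat n * diagonal fun k : Fin (2 ^ n) =>
      4 * (hamW n (k - k % 2) : ℝ) * ((n : ℝ) - hamW n (k - k % 2)) := by
  set M := hypercubeAdj n - weightDiag n
  set Λ := diagonal fun k : Fin (2 ^ n) => (n : ℝ) - 2 * hamW n (k - k % 2)
  have h₁ : M * PmatOf n Ffun = PmatOf n (fun α => Ffun α + Ffun (α - 1)) * Λ :=
    hypercubeAdj_sub_weightDiag_mul_PmatOf pellRecurrent_Ffun
  have h₂ :
      M * PmatOf n (fun α => Ffun α + Ffun (α - 1)) = (2 : ℝ) • PmatOf n Ffun * Λ := by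
    rw [hypercubeAdj_sub_weightDiag_mul_PmatOf pellRecurrent_Ffun.add_shift]
    congr 1
    ext i k
    simp only [PmatOf_apply, pellRecurrent_Ffun.add_shift_add_shift, Matrix.smul_apply, smul_eq_mul]
    ring
  have hΛ : (diagonal fun k : Fin (2 ^ n) =>
      4 * (hamW n (k - k % 2) : ℝ) * ((n : ℝ) - hamW n (k - k % 2))) =
        (n ^ 2 : ℝ) • 1 - Λ * Λ := by
    ext i j
    simp only [Λ, diagonal_mul_diagonal, Matrix.sub_apply, Matrix.smul_apply, one_apply,
      diagonal_apply, smul_eq_mul]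
    split_ifs <;> ring
  rw [Pmat_eq_PmatOf]
  calc Bmat n * PmatOf n Ffun
      = (n ^ 2 : ℝ) • PmatOf n Ffun - (1 / 2 : ℝ) • (M * (M * PmatOf n Ffun)) := by
        rw [Bmat_eq, Matrix.sub_mul, smul_mul, smul_mul, Matrix.one_mul, Matrix.mul_assoc]
    _ = (n ^ 2 : ℝ) • PmatOf n Ffun - PmatOf n Ffun * (Λ * Λ) := by
        rw [h₁, ← Matrix.mul_assoc, h₂, smul_mul, smul_mul, smul_smul, Matrix.mul_assoc]
        norm_num
    _ = PmatOf n Ffun * diagonal fun k : Fin (2 ^ n) =>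
          4 * (hamW n (k - k % 2) : ℝ) * ((n : ℝ) - hamW n (k - k % 2)) := by
        rw [hΛ, Matrix.mul_sub, Matrix.mul_smul, Matrix.mul_one]

theorem stmt0_general (n : ℕ) (k i : Fin (2 ^ n)) :
    ∑ j : Fin (2 ^ n), Bmat n i j * Pmat n j k =
      4 * (hamW n ((k : ℕ) - (k : ℕ) % 2) : ℝ) *
        ((n : ℝ) - (hamW n ((k : ℕ) - (k : ℕ) % 2) : ℝ)) * Pmat n i k := by
  rw [← mul_apply, Bmat_mul_Pmat, mul_diagonal, mul_comm]

/-- Each column of `P` is an eigenvector of `B` with eigenvalue `4 W(k₀)(n − W(k₀))`,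
where `k₀` is `k` with the last bit cleared. -/
theorem stmt0 (n : ℕ) (hn : 2 ≤ n) (k i : Fin (2 ^ n)) :
    ∑ j : Fin (2 ^ n), Bmat n i j * Pmat n j k =
      4 * (hamW n ((k : ℕ) - (k : ℕ) % 2) : ℝ) *
        ((n : ℝ) - (hamW n ((k : ℕ) - (k : ℕ) % 2) : ℝ)) * Pmat n i k :=
  stmt0_general n k i
end

section
/- Define a family of numbers μ^n_k for n ≥ 2 and even k with 0 ≤ k < 2^n by: μ^2_0 = 0, μ^2_2 = 4, and for n ≥ 3, μ^n_k = μ^{n−1}_k + 4·W(k) if k < 2^{n−1}, while μ^n_k = μ^{n−1}_{k−2^{n−1}} + 4(n−1) − 4·W(k − 2^{n−1}) if k ≥ 2^{n−1}. Then for all n ≥ 2 and all even k with 0 ≤ k < 2^n, μ^n_k = 4·W(k)·W(2^n − 1 − k) = 4·W(k)·(n − W(k)). -/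
/-- Hamming weight: the number of 1's in the binary representation of `i`
(for `i < 2^n` this is the weight of the `n`-bit binary representation). -/
def hweight (i : ℕ) : ℕ := (Nat.bits i).count true

lemma hweight_two_mul (q : ℕ) : hweight (2 * q) = hweight q := by
  rcases Nat.eq_zero_or_pos q with h | h
  · simp [h]
  · simp [hweight, Nat.bit0_bits q h.ne']

lemma hweight_two_mul_add_one (q : ℕ) : hweight (2 * q + 1) = hweight q + 1 := by
  simp [hweight, Nat.bit1_bits q]

lemma hweight_add_pow (m : ℕ) : ∀ j, j < 2 ^ m → hweight (j + 2 ^ m) = hweight j + 1 := by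
  induction m with
  | zero =>
    intro j hj
    interval_cases j
    simp [hweight]
  | succ m ih =>
    intro j hj
    have h2 : 2 ^ (m + 1) = 2 * 2 ^ m := by ring
    rcases Nat.even_or_odd j with ⟨q, hq'⟩ | ⟨q, hq'⟩
    · subst hq'
      have hqlt : q < 2 ^ m := by omega
      have hs : q + q + 2 ^ (m + 1) = 2 * (q + 2 ^ m) := by omega
      have hs2 : q + q = 2 * q := by omega
      rw [hs, hweight_two_mul, ih _ hqlt, hs2, hweight_two_mul]
    · subst hq'
      have hqlt : q < 2 ^ m := by omega
      have hs : 2 * q + 1 + 2 ^ (m + 1) = 2 * (q + 2 ^ m) + 1 := by omega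
      rw [hs, hweight_two_mul_add_one, ih _ hqlt, hweight_two_mul_add_one]

lemma hweight_compl (n : ℕ) : ∀ k, k < 2 ^ n →
    hweight k ≤ n ∧ hweight (2 ^ n - 1 - k) + hweight k = n := by
  induction n with
  | zero =>
    intro k hk
    interval_cases k
    simp [hweight]
  | succ n ih =>
    intro k hk
    have h2 : 2 ^ (n + 1) = 2 * 2 ^ n := by ring
    rcases lt_or_ge k (2 ^ n) with h | h
    · obtain ⟨h1, h2'⟩ := ih k h
      have hc : 2 ^ (n + 1) - 1 - k = (2 ^ n - 1 - k) + 2 ^ n := by omega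
      have hlt : 2 ^ n - 1 - k < 2 ^ n := by
        have := Nat.one_le_two_pow (n := n); omega
      rw [hc, hweight_add_pow n _ hlt]
      omega
    · set j := k - 2 ^ n with hj
      have hjlt : j < 2 ^ n := by omega
      obtain ⟨h1, h2'⟩ := ih j hjlt
      have hk' : k = j + 2 ^ n := by omega
      have hwk : hweight k = hweight j + 1 := by
        rw [hk', hweight_add_pow n _ hjlt]
      have hc : 2 ^ (n + 1) - 1 - k = 2 ^ n - 1 - j := by omega
      rw [hc, hwk]
      omega

/-- Any family `μ^n_k` (for `n ≥ 2`, `k` even, `0 ≤ k < 2^n`) satisfying the base cases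
`μ²₀ = 0`, `μ²₂ = 4` and the recursion
`μ^n_k = μ^{n−1}_k + 4 W(k)` for `k < 2^{n−1}` and
`μ^n_k = μ^{n−1}_{k−2^{n−1}} + 4(n−1) − 4 W(k − 2^{n−1})` for `k ≥ 2^{n−1}`
satisfies `μ^n_k = 4 W(k) W(2^n − 1 − k) = 4 W(k)(n − W(k))`. -/
theorem stmt1 (μ : ℕ → ℕ → ℤ)
    (h20 : μ 2 0 = 0) (h22 : μ 2 2 = 4)
    (hrec : ∀ n, 3 ≤ n → ∀ k, k < 2 ^ n → Even k →
      (k < 2 ^ (n - 1) → μ n k = μ (n - 1) k + 4 * (hweight k : ℤ)) ∧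
      (2 ^ (n - 1) ≤ k →
        μ n k = μ (n - 1) (k - 2 ^ (n - 1)) + 4 * ((n : ℤ) - 1)
          - 4 * (hweight (k - 2 ^ (n - 1)) : ℤ))) :
    ∀ n, 2 ≤ n → ∀ k, k < 2 ^ n → Even k →
      μ n k = 4 * (hweight k : ℤ) * (hweight (2 ^ n - 1 - k) : ℤ) ∧
      μ n k = 4 * (hweight k : ℤ) * ((n : ℤ) - (hweight k : ℤ)) := by
  have main : ∀ n, 2 ≤ n → ∀ k, k < 2 ^ n → Even k →
      μ n k = 4 * (hweight k : ℤ) * ((n : ℤ) - (hweight k : ℤ)) := by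
    intro n hn
    induction n, hn using Nat.le_induction with
    | base =>
      intro k hk hke
      have : k % 2 = 0 := Nat.even_iff.mp hke
      norm_num at hk
      interval_cases k
      · simpa [hweight] using h20
      · omega
      · have hw2 : hweight 2 = 1 := by
          rw [show (2:ℕ) = 2 * 1 from rfl, hweight_two_mul]
          simp [hweight, Nat.one_bits]
        rw [hw2, h22]; norm_num
      · omega
    | succ n hn ih =>
      intro k hk hke
      have h3 : 3 ≤ n + 1 := by omega
      have hrec' := hrec (n + 1) h3 k hk hke
      simp only [Nat.add_sub_cancel] at hrec'
      rcases lt_or_ge k (2 ^ n) with h | h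
      · have heq := hrec'.1 h
        rw [ih k h hke] at heq
        rw [heq]
        push_cast
        ring
      · have heq := hrec'.2 h
        set j := k - 2 ^ n with hj
        have hjlt : j < 2 ^ n := by
          have : 2 ^ (n + 1) = 2 * 2 ^ n := by ring
          omega
        have hje : Even j := by
          have h2e : k % 2 = 0 := Nat.even_iff.mp hke
          have hpe : 2 ^ n % 2 = 0 := by
            have hne : 2 ^ n = 2 * 2 ^ (n - 1) := by
              rw [← pow_succ']; congr 1; omega
            omega
          exact Nat.even_iff.mpr (by omega)
        have hwk : hweight k = hweight j + 1 := by
          have : k = j + 2 ^ n := by omega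
          rw [this, hweight_add_pow n _ hjlt]
        rw [ih j hjlt hje] at heq
        rw [heq, hwk]
        push_cast
        ring
  intro n hn k hk hke
  have h2 := main n hn k hk hke
  refine ⟨?_, h2⟩
  obtain ⟨h1, hc⟩ := hweight_compl n k hk
  have : (hweight (2 ^ n - 1 - k) : ℤ) = (n : ℤ) - (hweight k : ℤ) := by omega
  rw [this]; exact h2
end

section
/- For every n ≥ 2, the matrix P ∈ ℝ^{2^n × 2^n} is invertible. -/
/-!
Split off the least significant bit, `i = 2u + a`. For `x = 1 ± √2` let `H_m(x)` be the matrix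
`((-1)^c(u,w) x^d(u,w))`; it is the `m`-th Kronecker power of `!![1, x; x, -1]`, so
`H_m(x)² = (1 + x²)^m`. Since `F(k - 1)` is a combination of `(1 ± √2)^k`, the matrix `P` of
size `2^(m+1)` is a combination of the two blocks `H_m(x) ⊗ v_x v_xᵀ` with `v_x = (1, x)`.
As `(1 + √2)(1 - √2) = -1`, the two vectors `v_x` are orthogonal, so the cross terms of `P²`
vanish and `P² = 1 ⊗ M` for a `2 × 2` matrix `M`, whose determinant is `8^m`.
-/

open Matrix
open scoped Kronecker

lemma hamC_succ (m i j : ℕ) : hamC (m + 1) i j = hamC m (i / 2) (j / 2) + i % 2 * (j % 2) := by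
  unfold hamC
  rw [Finset.card_filter, Finset.card_filter, Finset.sum_range_succ']
  simp only [Nat.testBit_succ, Nat.testBit_zero]
  rcases Nat.mod_two_eq_zero_or_one i with hi | hi <;>
    rcases Nat.mod_two_eq_zero_or_one j with hj | hj <;> simp [hi, hj]

lemma hamD_succ (m i j : ℕ) :
    hamD (m + 1) i j = hamD m (i / 2) (j / 2) + if i % 2 = j % 2 then 0 else 1 := by
  unfold hamD
  rw [Finset.card_filter, Finset.card_filter, Finset.sum_range_succ']
  simp only [Nat.testBit_succ, Nat.testBit_zero]
  rcases Nat.mod_two_eq_zero_or_one i with hi | hi <;>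
    rcases Nat.mod_two_eq_zero_or_one j with hj | hj <;> simp [hi, hj]

def finTwoPowSuccEquiv (m : ℕ) : Fin (2 ^ m) × Fin 2 ≃ Fin (2 ^ (m + 1)) :=
  finProdFinEquiv.trans (finCongr (pow_succ 2 m).symm)

@[simp]
lemma finTwoPowSuccEquiv_val (m : ℕ) (p : Fin (2 ^ m) × Fin 2) :
    (finTwoPowSuccEquiv m p : ℕ) = p.2 + 2 * p.1 := by
  simp [finTwoPowSuccEquiv]

section Hamming

variable {R : Type*} [CommRing R]

def hammingMatrix (x : R) (m : ℕ) : Matrix (Fin (2 ^ m)) (Fin (2 ^ m)) R :=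
  of fun u w => (-1) ^ hamC m u w * x ^ hamD m u w

lemma hammingMatrix_zero (x : R) : hammingMatrix x 0 = 1 := by
  ext u w
  obtain rfl : u = w := Fin.ext (by omega)
  simp [hammingMatrix, hamC, hamD]

lemma hammingMatrix_succ (x : R) (m : ℕ) :
    hammingMatrix x (m + 1) = (hammingMatrix x m ⊗ₖ !![1, x; x, -1]).submatrix
      (finTwoPowSuccEquiv m).symm (finTwoPowSuccEquiv m).symm := by
  ext i k
  obtain ⟨⟨u, a⟩, rfl⟩ := (finTwoPowSuccEquiv m).surjective i
  obtain ⟨⟨w, b⟩, rfl⟩ := (finTwoPowSuccEquiv m).surjective k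
  simp only [hammingMatrix, submatrix_apply, Equiv.symm_apply_apply, kronecker_apply, of_apply,
    hamC_succ, hamD_succ, finTwoPowSuccEquiv_val]
  have hu : ((a : ℕ) + 2 * u) / 2 = u := by omega
  have hw : ((b : ℕ) + 2 * w) / 2 = w := by omega
  rw [hu, hw]
  fin_cases a <;> fin_cases b <;> simp [pow_add] <;> ring

lemma hammingMatrix_mul_self (x : R) (m : ℕ) :
    hammingMatrix x m * hammingMatrix x m = (1 + x ^ 2) ^ m • (1 : Matrix _ _ R) := by
  induction m with
  | zero => simp [hammingMatrix_zero]
  | succ m ih =>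
    have hblock : !![1, x; x, -1] * !![1, x; x, -1] = (1 + x ^ 2) • (1 : Matrix _ _ R) := by
      ext i j; fin_cases i <;> fin_cases j <;> simp <;> ring
    rw [hammingMatrix_succ, submatrix_mul_equiv, ← mul_kronecker_mul, ih, hblock, smul_kronecker,
      kronecker_smul, one_kronecker_one, smul_smul, submatrix_smul, Pi.smul_apply, Pi.smul_apply,
      submatrix_one_equiv, ← pow_succ]

lemma det_smul_vecMulVec_add_smul_vecMulVec (a b x y : R) :
    det (a • vecMulVec ![1, x] ![1, x] + b • vecMulVec ![1, y] ![1, y]) =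
      a * b * (x - y) ^ 2 := by
  rw [det_fin_two]
  simp
  ring

def hammingBlock (x : R) (m : ℕ) : Matrix (Fin (2 ^ m) × Fin 2) (Fin (2 ^ m) × Fin 2) R :=
  hammingMatrix x m ⊗ₖ vecMulVec ![1, x] ![1, x]

lemma hammingBlock_mul_self (x : R) (m : ℕ) :
    hammingBlock x m * hammingBlock x m =
      1 ⊗ₖ ((1 + x ^ 2) ^ (m + 1) • vecMulVec ![1, x] ![1, x]) := by
  have hdot : ![1, x] ⬝ᵥ ![1, x] = 1 + x ^ 2 := by simp [dotProduct, Fin.sum_univ_two, sq]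
  rw [hammingBlock, ← mul_kronecker_mul, hammingMatrix_mul_self, vecMulVec_mul_vecMulVec, hdot,
    vecMulVec_smul, smul_kronecker, ← kronecker_smul, smul_smul, ← pow_succ]

lemma hammingBlock_mul_hammingBlock_eq_zero {x y : R} (h : 1 + x * y = 0)
    (m : ℕ) : hammingBlock x m * hammingBlock y m = 0 := by
  have hdot : ![1, x] ⬝ᵥ ![1, y] = 1 + x * y := by simp [dotProduct, Fin.sum_univ_two]
  rw [hammingBlock, hammingBlock, ← mul_kronecker_mul, vecMulVec_mul_vecMulVec, hdot, h, zero_smul,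
    vecMulVec_zero, kronecker_zero]

lemma smul_hammingBlock_add_smul_hammingBlock_sq {x y : R} (h : 1 + x * y = 0) (m : ℕ)
    (a b : R) :
    (a • hammingBlock x m + b • hammingBlock y m) ^ 2 =
      1 ⊗ₖ ((a ^ 2 * (1 + x ^ 2) ^ (m + 1)) • vecMulVec ![1, x] ![1, x] +
        (b ^ 2 * (1 + y ^ 2) ^ (m + 1)) • vecMulVec ![1, y] ![1, y]) := by
  have h' : 1 + y * x = 0 := by rw [mul_comm, h]
  rw [sq, add_mul, mul_add, mul_add, smul_mul_smul, smul_mul_smul, smul_mul_smul, smul_mul_smul,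
    hammingBlock_mul_self, hammingBlock_mul_self, hammingBlock_mul_hammingBlock_eq_zero h,
    hammingBlock_mul_hammingBlock_eq_zero h', smul_zero, smul_zero, add_zero, zero_add,
    ← kronecker_smul, ← kronecker_smul, ← kronecker_add, smul_smul, smul_smul, ← sq a, ← sq b]

lemma det_smul_hammingBlock_add_smul_hammingBlock_sq {x y : R} (h : 1 + x * y = 0) (m : ℕ)
    (a b : R) : det (a • hammingBlock x m + b • hammingBlock y m) ^ 2 =
      (a ^ 2 * b ^ 2 * ((1 + x ^ 2) * (1 + y ^ 2)) ^ (m + 1) * (x - y) ^ 2) ^ 2 ^ m := by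
  rw [← det_pow, smul_hammingBlock_add_smul_hammingBlock_sq h, det_kronecker, det_one, one_pow,
    one_mul, det_smul_vecMulVec_add_smul_vecMulVec, Fintype.card_fin, mul_pow (1 + x ^ 2)]
  ring

end Hamming

lemma one_add_sqrt_two_mul_one_sub_sqrt_two : (1 + √2) * (1 - √2) = -1 := by
  linear_combination -Real.sq_sqrt (show (0 : ℝ) ≤ 2 by norm_num)

lemma Ffun_natCast_sub_one (k : ℕ) :
    Ffun (k - 1) = (-(1 - √2) * (1 + √2) ^ k + (1 + √2) * (1 - √2) ^ k) / (2 * √2) := by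
  have h := one_add_sqrt_two_mul_one_sub_sqrt_two
  have hinv₁ : (1 + √2)⁻¹ = -(1 - √2) := inv_eq_of_mul_eq_one_right (by linear_combination -h)
  have hinv₂ : (1 - √2)⁻¹ = -(1 + √2) := inv_eq_of_mul_eq_one_right (by linear_combination -h)
  have hne₁ : 1 + √2 ≠ 0 := by positivity
  have hne₂ : 1 - √2 ≠ 0 := fun h0 => by simp [h0] at h
  rw [Ffun, zpow_sub_one₀ hne₁, zpow_sub_one₀ hne₂, zpow_natCast, zpow_natCast, hinv₁, hinv₂]
  ring

lemma submatrix_Pmat_succ (m : ℕ) :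
    (Pmat (m + 1)).submatrix (finTwoPowSuccEquiv m) (finTwoPowSuccEquiv m) =
      (-(1 - √2) / (2 * √2)) • hammingBlock (1 + √2) m +
        ((1 + √2) / (2 * √2)) • hammingBlock (1 - √2) m := by
  ext ⟨u, a⟩ ⟨w, b⟩
  have hi : (((a + 2 * u : ℕ) : ℤ) % 2) = a := by omega
  have hk : (((b + 2 * w : ℕ) : ℤ) % 2) = b := by omega
  have hi₀ : (a + 2 * u : ℕ) - (a + 2 * u) % 2 = 2 * u := by omega
  have hk₀ : (b + 2 * w : ℕ) - (b + 2 * w) % 2 = 2 * w := by omega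
  have hcast : (hamD m u w : ℤ) - 1 + a + b = ((hamD m u w + a + b : ℕ) : ℤ) - 1 := by
    push_cast; ring
  have hvec (x : ℝ) (c : Fin 2) : ![1, x] c = x ^ (c : ℕ) := by fin_cases c <;> simp
  simp only [Pmat, submatrix_apply, finTwoPowSuccEquiv_val, hi, hk, hi₀, hk₀, hamC_succ, hamD_succ,
    Nat.mul_div_cancel_left _ two_pos, Nat.mul_mod_right, mul_zero, add_zero, if_true, hcast,
    Ffun_natCast_sub_one, hammingBlock, hammingMatrix, kronecker_apply, vecMulVec_apply, of_apply,
    Matrix.add_apply, Matrix.smul_apply, smul_eq_mul, hvec]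
  ring

lemma det_Pmat_succ_sq (m : ℕ) : (Pmat (m + 1)).det ^ 2 = 8 ^ (m * 2 ^ m) := by
  rw [← det_submatrix_equiv_self (finTwoPowSuccEquiv m), submatrix_Pmat_succ,
    det_smul_hammingBlock_add_smul_hammingBlock_sq
      (by rw [one_add_sqrt_two_mul_one_sub_sqrt_two]; norm_num), pow_mul]
  congr 1
  have hs : √2 ^ 2 = 2 := Real.sq_sqrt (by norm_num)
  have hs0 : √2 ≠ 0 := by positivity
  have hcoeff : (-(1 - √2) / (2 * √2)) ^ 2 * ((1 + √2) / (2 * √2)) ^ 2 = 1 / 64 := by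
    field_simp
    linear_combination (48 * √2 ^ 2 - 32) * hs
  have h8 : (1 + (1 + √2) ^ 2) * (1 + (1 - √2) ^ 2) = 8 := by
    linear_combination (√2 ^ 2 + 2) * hs
  have hdiff : (1 + √2 - (1 - √2)) ^ 2 = 8 := by linear_combination 4 * hs
  rw [hcoeff, h8, hdiff, pow_succ]
  ring

/-- For every `n ≥ 2`, the matrix `P` is invertible. -/
theorem stmt3 (n : ℕ) (hn : 2 ≤ n) : IsUnit (Pmat n) := by
  obtain ⟨m, rfl⟩ : ∃ m, n = m + 1 := ⟨n - 1, by omega⟩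
  rw [isUnit_iff_isUnit_det, isUnit_iff_ne_zero, ← pow_ne_zero_iff two_ne_zero, det_Pmat_succ_sq]
  positivity
end

section
/- Let n ≥ 1 and t ≥ 0 be natural numbers, and let x_{1,0}, …, x_{n,0} be real numbers (initial positions). Consider the uniform probability measure on Ω = (Fin n × Fin t) → {−1, 1}, and for ω ∈ Ω define X_i(ω) = x_{i,0} + Σ_{γ=1}^{t} ω(i,γ). Then the expected value of Σ_{i=1}^{n} (X_i − (1/n)·Σ_{j=1}^{n} X_j)² equals ((n−1)/n)·Σ_{i=1}^{n} x_{i,0}² − (1/n)·Σ_{j≠k} x_{j,0}·x_{k,0} + (n−1)·t. In particular, the average relative distance of an n-walker classical random walk with independent unbiased ±1 steps grows linearly in the number t of steps. -/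
open Finset

abbrev Vpm : Finset ℤ := {-1, 1}

lemma sumA : ∑ a : Vpm, ((a : ℤ) : ℝ) = 0 := by
  rw [Finset.sum_coe_sort Vpm (fun z : ℤ => ((z : ℝ)))]
  norm_num [Finset.sum_pair (by norm_num : (-1 : ℤ) ≠ 1)]

lemma sumA2 : ∑ a : Vpm, ((a : ℤ) : ℝ) * ((a : ℤ) : ℝ) = 2 := by
  rw [Finset.sum_coe_sort Vpm (fun z : ℤ => ((z : ℝ) * (z : ℝ)))]
  norm_num [Finset.sum_pair (by norm_num : (-1 : ℤ) ≠ 1)]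

lemma card_Vpm : Fintype.card Vpm = 2 := by
  simp [Fintype.card_coe]

lemma moment1 {I : Type*} [Fintype I] [DecidableEq I] (p : I) :
    ∑ ω : I → Vpm, ((ω p : ℤ) : ℝ) = 0 := by
  have h : ∀ ω : I → Vpm,
      ((ω p : ℤ) : ℝ) = ∏ i, (if i = p then ((ω i : ℤ) : ℝ) else 1) := by
    intro ω
    rw [Finset.prod_ite_eq' univ p (fun i => ((ω i : ℤ) : ℝ))]
    simp
  simp_rw [h]
  rw [← Fintype.piFinset_univ,
    ← Finset.prod_univ_sum (fun _ => (univ : Finset Vpm))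
      (fun i (a : Vpm) => if i = p then ((a : ℤ) : ℝ) else 1)]
  apply Finset.prod_eq_zero (Finset.mem_univ p)
  simp only [if_pos]
  exact sumA

lemma moment2 {I : Type*} [Fintype I] [DecidableEq I] (p q : I) :
    ∑ ω : I → Vpm, ((ω p : ℤ) : ℝ) * ((ω q : ℤ) : ℝ)
      = if p = q then (Fintype.card (I → Vpm) : ℝ) else 0 := by
  have h : ∀ ω : I → Vpm,
      ((ω p : ℤ) : ℝ) * ((ω q : ℤ) : ℝ)
        = ∏ i, ((if i = p then ((ω i : ℤ) : ℝ) else 1) * (if i = q then ((ω i : ℤ) : ℝ) else 1)) := by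
    intro ω
    rw [Finset.prod_mul_distrib, Finset.prod_ite_eq' univ p (fun i => ((ω i : ℤ) : ℝ)),
      Finset.prod_ite_eq' univ q (fun i => ((ω i : ℤ) : ℝ))]
    simp
  simp_rw [h]
  rw [← Fintype.piFinset_univ,
    ← Finset.prod_univ_sum (fun _ => (univ : Finset Vpm))
      (fun i (a : Vpm) => (if i = p then ((a : ℤ) : ℝ) else 1) * (if i = q then ((a : ℤ) : ℝ) else 1))]
  by_cases hpq : p = q
  · subst hpq
    rw [if_pos rfl]
    have h2 : ∀ i : I, (∑ a : Vpm,
        (if i = p then ((a : ℤ) : ℝ) else 1) * (if i = p then ((a : ℤ) : ℝ) else 1)) = 2 := by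
      intro i
      by_cases hi : i = p
      · subst hi
        simp only [if_pos]
        exact sumA2
      · simp only [hi, if_false, mul_one]
        rw [Finset.sum_const, card_univ, card_Vpm]
        norm_num
    rw [Finset.prod_congr rfl fun i _ => h2 i, Finset.prod_const, card_univ]
    simp [Fintype.card_fun, card_Vpm]
  · rw [if_neg hpq]
    apply Finset.prod_eq_zero (Finset.mem_univ p)
    simp only [if_pos, hpq, if_false, mul_one]
    exact sumA

noncomputable def Sw (n t : ℕ) (ω : (Fin n × Fin t) → Vpm) (i : Fin n) : ℝ :=
  ∑ γ : Fin t, ((ω (i, γ) : ℤ) : ℝ)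

lemma Sw_moment1 (n t : ℕ) (j : Fin n) :
    ∑ ω : (Fin n × Fin t) → Vpm, Sw n t ω j = 0 := by
  unfold Sw
  rw [Finset.sum_comm]
  simp [moment1]

lemma Sw_moment2 (n t : ℕ) (j k : Fin n) :
    ∑ ω : (Fin n × Fin t) → Vpm, Sw n t ω j * Sw n t ω k
      = if j = k then (Fintype.card ((Fin n × Fin t) → Vpm) : ℝ) * t else 0 := by
  unfold Sw
  simp_rw [Finset.sum_mul_sum]
  rw [Finset.sum_comm]
  have step : ∀ γ : Fin t,
      ∑ ω : (Fin n × Fin t) → Vpm, ∑ δ : Fin t, ((ω (j, γ) : ℤ) : ℝ) * ((ω (k, δ) : ℤ) : ℝ)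
        = ∑ δ : Fin t, if (j, γ) = (k, δ) then (Fintype.card ((Fin n × Fin t) → Vpm) : ℝ) else 0 := by
    intro γ
    rw [Finset.sum_comm]
    exact Finset.sum_congr rfl fun δ _ => moment2 (j, γ) (k, δ)
  rw [Finset.sum_congr rfl fun γ _ => step γ]
  by_cases hjk : j = k
  · subst hjk
    simp [Prod.mk.injEq, mul_comm]
  · simp [Prod.mk.injEq, hjk]

lemma card_fun_pm (I : Type*) [Fintype I] [DecidableEq I] :
    (Fintype.card (I → Vpm) : ℝ) = 2 ^ (Fintype.card I) := by
  simp [Fintype.card_fun, card_Vpm]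

/-- For an `n`-walker classical random walk with independent unbiased `±1` steps
(uniform measure on `Ω = (Fin n × Fin t) → {−1,1}`), the expected relative distance
after `t` steps is `((n−1)/n)·Σ_i x_{i0}² − (1/n)·Σ_{j≠k} x_{j0} x_{k0} + (n−1)·t`,
which grows linearly in `t`. -/
theorem stmt9 (n t : ℕ) (hn : 1 ≤ n) (x : Fin n → ℝ) :
    (∑ ω : (Fin n × Fin t) → ({-1, 1} : Finset ℤ),
        ∑ i : Fin n,
          ((x i + ∑ γ : Fin t, ((ω (i, γ) : ℤ) : ℝ)) -
            (1 / (n : ℝ)) * ∑ j : Fin n, (x j + ∑ γ : Fin t, ((ω (j, γ) : ℤ) : ℝ))) ^ 2) /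
      (Fintype.card ((Fin n × Fin t) → ({-1, 1} : Finset ℤ)) : ℝ) =
    ((n : ℝ) - 1) / (n : ℝ) * ∑ i : Fin n, (x i) ^ 2 -
      (1 / (n : ℝ)) * ∑ p ∈ (Finset.univ : Finset (Fin n)).offDiag, x p.1 * x p.2 +
      ((n : ℝ) - 1) * (t : ℝ) := by
  have hn0 : (n : ℝ) ≠ 0 := Nat.cast_ne_zero.mpr (by omega)
  have hc0 : (Fintype.card ((Fin n × Fin t) → Vpm) : ℝ) ≠ 0 := by
    rw [card_fun_pm]; positivity
  set c : ℝ := (Fintype.card ((Fin n × Fin t) → Vpm) : ℝ) with hc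
  set m : ℝ := (1 / (n : ℝ)) * ∑ j : Fin n, x j with hm
  set A : ℝ := ∑ i : Fin n, (x i - m) ^ 2 with hA
  show (∑ ω : (Fin n × Fin t) → Vpm,
        ∑ i : Fin n,
          ((x i + Sw n t ω i) - (1 / (n : ℝ)) * ∑ j : Fin n, (x j + Sw n t ω j)) ^ 2) / c = _
  have key : ∀ ω : (Fin n × Fin t) → Vpm,
      ∑ i : Fin n, ((x i + Sw n t ω i) - (1 / (n : ℝ)) * ∑ j : Fin n, (x j + Sw n t ω j)) ^ 2
        = A + 2 * ∑ i : Fin n, (x i - m) * (Sw n t ω i - (1 / (n : ℝ)) * ∑ j : Fin n, Sw n t ω j)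
          + ∑ i : Fin n, (Sw n t ω i - (1 / (n : ℝ)) * ∑ j : Fin n, Sw n t ω j) ^ 2 := by
    intro ω
    have e : ∀ i : Fin n, x i + Sw n t ω i - (1 / (n : ℝ)) * ∑ j : Fin n, (x j + Sw n t ω j)
        = (x i - m) + (Sw n t ω i - (1 / (n : ℝ)) * ∑ j : Fin n, Sw n t ω j) := by
      intro i
      rw [Finset.sum_add_distrib, hm]
      ring
    calc ∑ i : Fin n, ((x i + Sw n t ω i) - (1 / (n : ℝ)) * ∑ j : Fin n, (x j + Sw n t ω j)) ^ 2
        = ∑ i : Fin n, ((x i - m) + (Sw n t ω i - (1 / (n : ℝ)) * ∑ j : Fin n, Sw n t ω j)) ^ 2 :=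
          Finset.sum_congr rfl fun i _ => by rw [e i]
      _ = A + 2 * ∑ i : Fin n, (x i - m) * (Sw n t ω i - (1 / (n : ℝ)) * ∑ j : Fin n, Sw n t ω j)
          + ∑ i : Fin n, (Sw n t ω i - (1 / (n : ℝ)) * ∑ j : Fin n, Sw n t ω j) ^ 2 := by
          rw [hA, Finset.mul_sum Finset.univ
              (fun i => (x i - m) * (Sw n t ω i - (1 / (n : ℝ)) * ∑ j : Fin n, Sw n t ω j)) 2,
            ← Finset.sum_add_distrib, ← Finset.sum_add_distrib]
          exact Finset.sum_congr rfl fun i _ => by ring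
  rw [Finset.sum_congr rfl fun ω _ => key ω]
  rw [Finset.sum_add_distrib, Finset.sum_add_distrib, Finset.sum_const, card_univ,
    nsmul_eq_mul, ← hc]
  -- the ω-sum of each centered walker sum vanishes
  have hT : ∀ i : Fin n, ∑ ω : (Fin n × Fin t) → Vpm,
      (Sw n t ω i - (1 / (n : ℝ)) * ∑ j : Fin n, Sw n t ω j) = 0 := by
    intro i
    rw [Finset.sum_sub_distrib, Sw_moment1]
    have : ∑ ω : (Fin n × Fin t) → Vpm, (1 / (n : ℝ)) * ∑ j : Fin n, Sw n t ω j
        = (1 / (n : ℝ)) * ∑ j : Fin n, ∑ ω : (Fin n × Fin t) → Vpm, Sw n t ω j := by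
      rw [← Finset.mul_sum, Finset.sum_comm]
    rw [this]
    simp [Sw_moment1]
  have hcross : ∑ ω : (Fin n × Fin t) → Vpm,
      2 * ∑ i : Fin n, (x i - m) * (Sw n t ω i - (1 / (n : ℝ)) * ∑ j : Fin n, Sw n t ω j) = 0 := by
    rw [← Finset.mul_sum, Finset.sum_comm]
    have : ∀ i : Fin n, ∑ ω : (Fin n × Fin t) → Vpm,
        (x i - m) * (Sw n t ω i - (1 / (n : ℝ)) * ∑ j : Fin n, Sw n t ω j) = 0 := by
      intro i
      rw [← Finset.mul_sum, hT i, mul_zero]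
    rw [Finset.sum_congr rfl fun i _ => this i]
    simp
  -- second moments of the centered sums
  have haa : ∀ i : Fin n, ∑ ω : (Fin n × Fin t) → Vpm, Sw n t ω i * Sw n t ω i = c * t := by
    intro i
    have h := Sw_moment2 n t i i
    rw [if_pos rfl] at h
    exact h
  have hab : ∀ i : Fin n, ∑ ω : (Fin n × Fin t) → Vpm,
      Sw n t ω i * ∑ j : Fin n, Sw n t ω j = c * t := by
    intro i
    have e1 : ∀ ω : (Fin n × Fin t) → Vpm, Sw n t ω i * ∑ j : Fin n, Sw n t ω j
        = ∑ j : Fin n, Sw n t ω i * Sw n t ω j := fun ω => Finset.mul_sum _ _ _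
    rw [Finset.sum_congr rfl fun ω _ => e1 ω, Finset.sum_comm]
    rw [Finset.sum_congr rfl fun j _ => Sw_moment2 n t i j, Finset.sum_ite_eq,
      if_pos (Finset.mem_univ i)]
  have hbb : ∑ ω : (Fin n × Fin t) → Vpm,
      (∑ j : Fin n, Sw n t ω j) * ∑ k : Fin n, Sw n t ω k = (n : ℝ) * (c * t) := by
    have e1 : ∀ ω : (Fin n × Fin t) → Vpm,
        (∑ j : Fin n, Sw n t ω j) * ∑ k : Fin n, Sw n t ω k
          = ∑ j : Fin n, ∑ k : Fin n, Sw n t ω j * Sw n t ω k := fun ω => Finset.sum_mul_sum _ _ _ _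
    rw [Finset.sum_congr rfl fun ω _ => e1 ω, Finset.sum_comm]
    have e2 : ∀ j : Fin n, ∑ ω : (Fin n × Fin t) → Vpm, ∑ k : Fin n, Sw n t ω j * Sw n t ω k
        = ∑ k : Fin n, if j = k then c * t else 0 := by
      intro j
      rw [Finset.sum_comm]
      exact Finset.sum_congr rfl fun k _ => Sw_moment2 n t j k
    rw [Finset.sum_congr rfl fun j _ => e2 j]
    rw [Finset.sum_congr rfl fun j _ =>
        (by rw [Finset.sum_ite_eq, if_pos (Finset.mem_univ j)] :
          (∑ k : Fin n, if j = k then c * (t : ℝ) else 0) = c * t)]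
    rw [Finset.sum_const, card_univ, Fintype.card_fin, nsmul_eq_mul]
  have hquad : ∑ ω : (Fin n × Fin t) → Vpm,
      ∑ i : Fin n, (Sw n t ω i - (1 / (n : ℝ)) * ∑ j : Fin n, Sw n t ω j) ^ 2
        = c * (((n : ℝ) - 1) * t) := by
    rw [Finset.sum_comm]
    have per : ∀ i : Fin n, ∑ ω : (Fin n × Fin t) → Vpm,
        (Sw n t ω i - (1 / (n : ℝ)) * ∑ j : Fin n, Sw n t ω j) ^ 2
          = c * t - (2 / (n : ℝ)) * (c * t) + (1 / (n : ℝ)) * ((1 / (n : ℝ)) * ((n : ℝ) * (c * t))) := by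
      intro i
      have expand : ∀ ω : (Fin n × Fin t) → Vpm,
          (Sw n t ω i - (1 / (n : ℝ)) * ∑ j : Fin n, Sw n t ω j) ^ 2
            = Sw n t ω i * Sw n t ω i
              - (2 / (n : ℝ)) * (Sw n t ω i * ∑ j : Fin n, Sw n t ω j)
              + (1 / (n : ℝ)) * ((1 / (n : ℝ)) *
                  ((∑ j : Fin n, Sw n t ω j) * ∑ k : Fin n, Sw n t ω k)) := fun ω => by ring
      rw [Finset.sum_congr rfl fun ω _ => expand ω, Finset.sum_add_distrib,
        Finset.sum_sub_distrib, haa i, ← Finset.mul_sum, hab i, ← Finset.mul_sum,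
        ← Finset.mul_sum, hbb]
    rw [Finset.sum_congr rfl fun i _ => per i, Finset.sum_const, card_univ, Fintype.card_fin,
      nsmul_eq_mul]
    field_simp
    ring
  rw [hcross, hquad, add_zero]
  have hdiv : (c * A + c * (((n : ℝ) - 1) * t)) / c = A + ((n : ℝ) - 1) * t := by
    field_simp
  rw [hdiv]
  -- final algebraic identity
  have hsq : (∑ i : Fin n, x i) * (∑ i : Fin n, x i)
      = ∑ i : Fin n, x i ^ 2 + ∑ p ∈ (Finset.univ : Finset (Fin n)).offDiag, x p.1 * x p.2 := by
    rw [Finset.sum_mul_sum]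
    rw [← Finset.sum_product' (f := fun a b => x a * x b)]
    rw [← Finset.diag_union_offDiag (Finset.univ : Finset (Fin n)),
      Finset.sum_union (Finset.disjoint_diag_offDiag _), Finset.sum_diag]
    simp [sq]
  have hAval : A = ∑ i : Fin n, x i ^ 2
      - (1 / (n : ℝ)) * ((∑ i : Fin n, x i) * (∑ i : Fin n, x i)) := by
    rw [hA]
    have e : ∀ i : Fin n, (x i - m) ^ 2 = x i ^ 2 - 2 * m * x i + m ^ 2 := fun i => by ring
    rw [Finset.sum_congr rfl fun i _ => e i, Finset.sum_add_distrib, Finset.sum_sub_distrib,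
      Finset.sum_const, card_univ, Fintype.card_fin, nsmul_eq_mul, ← Finset.mul_sum, hm]
    field_simp
    ring
  rw [hAval, hsq]
  field_simp
  ring
end

section
/- For every integer x, the complex integral ∫_{−π}^{π} (−2·cos²(K)/(cos(2K) + 3))·e^{iKx} dK equals (√2 − 2)·π if x = 0, and equals √2·π·(√2 − 1)^{|x|}·cos(πx/2) if x ≠ 0. -/
/-!
Since `cos 2K = 2 cos² K - 1`, the integrand is `-1 + 2 g(K)` with `g(K) = 1 / (cos 2K + 3)`, so
everything reduces to the coefficients `d_x = ∫_{-π}^{π} g(K) e^{iKx} dK`. Multiplying `g` by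
`cos 2K + 3 = (e^{2iK} + e^{-2iK}) / 2 + 3` gives `d_{x+2} + 6 d_x + d_{x-2} = 4π δ_{x,0}`.
The `d_x` are even in `x`, vanish for odd `x` because `g` has period `π`, and `d_0 = π / √2` is
computed from an explicit arctan primitive. An even solution of the recurrence is determined by its
value at `0`, and `m ↦ (π / √2) (-(√2 - 1)²)^|m|` is one, since `-(√2 - 1)² = 2√2 - 3` is a root of
`t² + 6t + 1`.
-/

open Real MeasureTheory

/-- With `r = a - √(a² - 1)` one has `1 + 2r cos θ + r² = 2r (a + cos θ)`, so `(a + cos θ)⁻¹` is a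
multiple of the Poisson kernel `P_r(θ + π)`, whose primitive is the arctan term. Unlike
`arctan (c tan (θ / 2))`, this primitive is continuous on all of `ℝ`. -/
noncomputable def invAddCosPrimitive (a θ : ℝ) : ℝ :=
  (θ - 2 * arctan ((a - √(a ^ 2 - 1)) * sin θ / (1 + (a - √(a ^ 2 - 1)) * cos θ))) / √(a ^ 2 - 1)

lemma hasDerivAt_invAddCosPrimitive {a : ℝ} (ha : 1 < a) (θ : ℝ) :
    HasDerivAt (invAddCosPrimitive a) (a + cos θ)⁻¹ θ := by
  set s := √(a ^ 2 - 1)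
  set r := a - s
  have hs : s ^ 2 = a ^ 2 - 1 := sq_sqrt (by nlinarith)
  have hs0 : 0 < s := sqrt_pos.mpr (by nlinarith)
  have hr1 : r < 1 := by nlinarith
  have hden : 0 < 1 + r * cos θ := by nlinarith [neg_one_le_cos θ, cos_le_one θ]
  have hpos : 0 < a + cos θ := by linarith [neg_one_le_cos θ]
  have hu := ((hasDerivAt_sin θ).const_mul r).div ((hasDerivAt_cos θ).const_mul r |>.const_add 1)
    hden.ne'
  refine (((hasDerivAt_id θ).sub (hu.arctan.const_mul 2)).div_const s).congr_deriv ?_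
  simp only [Pi.div_apply]
  field_simp
  linear_combination (a + cos θ - s) * hs - r ^ 2 * (a + cos θ + s) * sin_sq_add_cos_sq θ

lemma integral_inv_add_cos_two_mul {a : ℝ} (ha : 1 < a) :
    ∫ K in (-π)..π, (a + cos (2 * K))⁻¹ = 2 * π / √(a ^ 2 - 1) := by
  have hcont : Continuous fun θ => (a + cos θ)⁻¹ :=
    Continuous.inv₀ (by fun_prop) fun θ => by linarith [neg_one_le_cos θ]
  rw [intervalIntegral.integral_comp_mul_left (fun θ => (a + cos θ)⁻¹) two_ne_zero,
    intervalIntegral.integral_eq_sub_of_hasDerivAt (fun θ _ => hasDerivAt_invAddCosPrimitive ha θ)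
      (hcont.intervalIntegrable _ _)]
  simp only [invAddCosPrimitive, mul_neg, sin_neg, sin_two_pi, neg_zero, mul_zero, zero_div,
    arctan_zero, sub_zero, smul_eq_mul]
  ring

lemma Function.Even.eq_of_recurrence {𝕜 : Type*} [Field 𝕜] [CharZero 𝕜] {u v : ℤ → 𝕜}
    {a : 𝕜} {s : ℕ → 𝕜} (hu : Function.Even u) (hv : Function.Even v)
    (hu_rec : ∀ n : ℕ, u (n + 1) + a * u n + u (n - 1) = s n)
    (hv_rec : ∀ n : ℕ, v (n + 1) + a * v n + v (n - 1) = s n) (h₀ : u 0 = v 0) : u = v := by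
  have hnat : ∀ n : ℕ, u n = v n ∧ u (n + 1) = v (n + 1) := by
    intro n
    induction n with
    | zero =>
      have h₁ : u 1 + a * u 0 + u 1 = v 1 + a * v 0 + v 1 := by
        simpa [hu 1, hv 1] using (hu_rec 0).trans (hv_rec 0).symm
      refine ⟨by simpa using h₀, ?_⟩
      simp only [CharP.cast_eq_zero, zero_add]
      linear_combination (h₁ - a * h₀) / 2
    | succ n ih =>
      refine ⟨by exact_mod_cast ih.2, ?_⟩
      have h := (hu_rec (n + 1)).trans (hv_rec (n + 1)).symm
      push_cast at h ⊢
      simp only [add_sub_cancel_right] at h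
      linear_combination h - a * ih.2 - ih.1
  funext x
  obtain ⟨n, rfl | rfl⟩ := Int.eq_nat_or_neg x
  · exact (hnat n).1
  · rw [hu, hv]
    exact (hnat n).1

/-- Fourier coefficient on `[-π, π]` with kernel `e^{+iKx}` and without the factor `1 / (2π)`. -/
noncomputable def expCoeff (f : ℝ → ℂ) (x : ℤ) : ℂ :=
  ∫ K in (-π)..π, f K * Complex.exp (Complex.I * K * x)

lemma expCoeff_one (x : ℤ) : expCoeff 1 x = if x = 0 then 2 * (π : ℂ) else 0 := by
  unfold expCoeff
  split_ifs with hx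
  · simp [hx]
    ring
  · have hc : Complex.I * x ≠ 0 := mul_ne_zero Complex.I_ne_zero (by exact_mod_cast hx)
    simp only [Pi.one_apply, one_mul, mul_right_comm Complex.I (_ : ℂ) (x : ℂ)]
    rw [integral_exp_mul_complex hc, div_eq_zero_iff, sub_eq_zero]
    left
    calc Complex.exp (Complex.I * x * π)
        = Complex.exp (Complex.I * x * ↑(-π) + x * (2 * π * Complex.I)) := by push_cast; ring_nf
      _ = Complex.exp (Complex.I * x * ↑(-π)) := by
        rw [Complex.exp_add, Complex.exp_int_mul_two_pi_mul_I, mul_one]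

lemma expCoeff_add {f g : ℝ → ℂ} (hf : IntervalIntegrable f volume (-π) π)
    (hg : IntervalIntegrable g volume (-π) π) (x : ℤ) :
    expCoeff (f + g) x = expCoeff f x + expCoeff g x := by
  have he : ContinuousOn (fun K : ℝ => Complex.exp (Complex.I * K * x)) (Set.uIcc (-π) π) := by
    fun_prop
  simp only [expCoeff, Pi.add_apply, add_mul]
  exact intervalIntegral.integral_add (hf.mul_continuousOn he) (hg.mul_continuousOn he)

lemma expCoeff_const_mul (c : ℂ) (f : ℝ → ℂ) (x : ℤ) :
    expCoeff (fun K => c * f K) x = c * expCoeff f x := by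
  simp only [expCoeff, mul_assoc, intervalIntegral.integral_const_mul]

lemma expCoeff_mul_exp (f : ℝ → ℂ) (x n : ℤ) :
    expCoeff (fun K => f K * Complex.exp (Complex.I * K * n)) x = expCoeff f (x + n) := by
  simp only [expCoeff, mul_assoc, ← Complex.exp_add]
  refine intervalIntegral.integral_congr fun K _ => ?_
  push_cast
  ring_nf

lemma expCoeff_mul_cos_two_mul {f : ℝ → ℂ} (hf : IntervalIntegrable f volume (-π) π) (x : ℤ) :
    expCoeff (fun K => f K * Complex.cos (2 * K)) x =
      (expCoeff f (x + 2) + expCoeff f (x - 2)) / 2 := by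
  have hmul (n : ℤ) : IntervalIntegrable (fun K => f K * Complex.exp (Complex.I * K * n)) volume
      (-π) π :=
    hf.mul_continuousOn (by fun_prop)
  have hcos : (fun K : ℝ => f K * Complex.cos (2 * K)) = fun K => (1 / 2 : ℂ) *
      ((fun K : ℝ => f K * Complex.exp (Complex.I * K * (2 : ℤ))) +
        (fun K : ℝ => f K * Complex.exp (Complex.I * K * (-2 : ℤ)))) K := by
    ext K
    simp only [Pi.add_apply, Complex.cos, Int.cast_ofNat, Int.cast_neg]
    ring_nf
  rw [hcos, expCoeff_const_mul, expCoeff_add (hmul 2) (hmul (-2)), expCoeff_mul_exp,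
    expCoeff_mul_exp, ← sub_eq_add_neg]
  ring

lemma expCoeff_neg_of_even {f : ℝ → ℂ} (hf : Function.Even f) (x : ℤ) :
    expCoeff f (-x) = expCoeff f x := by
  have hneg := intervalIntegral.integral_comp_neg (a := -π) (b := π)
    fun K : ℝ => f K * Complex.exp (Complex.I * K * x)
  rw [neg_neg] at hneg
  rw [expCoeff, expCoeff, ← hneg]
  refine intervalIntegral.integral_congr fun K _ => ?_
  simp only [hf K]
  push_cast
  ring_nf

lemma expCoeff_eq_zero_of_odd {f : ℝ → ℂ} (hf : Function.Periodic f π) {x : ℤ} (hx : Odd x) :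
    expCoeff f x = 0 := by
  set h := fun K : ℝ => f K * Complex.exp (Complex.I * K * x)
  have hshift (K : ℝ) : h (K + π) = -h K := by
    have hexp : Complex.exp (Complex.I * ↑(K + π) * x) =
        Complex.exp (Complex.I * K * x) * Complex.exp (π * Complex.I) ^ x := by
      rw [← Complex.exp_int_mul, ← Complex.exp_add]
      push_cast
      ring_nf
    simp only [h, hf K, hexp, Complex.exp_pi_mul_I, hx.neg_one_zpow]
    ring
  have hper : Function.Periodic h (2 * π) := fun K => by
    rw [two_mul, ← add_assoc, hshift, hshift, neg_neg]
  have hanti : expCoeff f x = -expCoeff f x := calc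
    expCoeff f x = ∫ K in (-π)..(-π + 2 * π), h K := by rw [show -π + 2 * π = π by ring]; rfl
    _ = ∫ K in (-π + π)..(-π + π + 2 * π), h K := hper.intervalIntegral_add_eq _ _
    _ = ∫ K in (-π)..(-π + 2 * π), h (K + π) := by
      rw [intervalIntegral.integral_comp_add_right]; ring_nf
    _ = -expCoeff f x := by
      rw [show -π + 2 * π = π by ring, intervalIntegral.integral_congr fun K _ => hshift K,
        intervalIntegral.integral_neg]
      rfl
  linear_combination hanti / 2

noncomputable def invCosTwoMulAddThree (K : ℝ) : ℂ := ((cos (2 * K) + 3)⁻¹ : ℝ)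

lemma continuous_invCosTwoMulAddThree : Continuous invCosTwoMulAddThree :=
  Complex.continuous_ofReal.comp <|
    Continuous.inv₀ (by fun_prop) fun K => by linarith [neg_one_le_cos (2 * K)]

lemma invCosTwoMulAddThree_even : Function.Even invCosTwoMulAddThree := fun K => by
  rw [invCosTwoMulAddThree, invCosTwoMulAddThree, mul_neg, cos_neg]

lemma invCosTwoMulAddThree_periodic : Function.Periodic invCosTwoMulAddThree π := fun K => by
  rw [invCosTwoMulAddThree, invCosTwoMulAddThree, mul_add, cos_add_two_pi]

lemma invCosTwoMulAddThree_mul (K : ℝ) :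
    invCosTwoMulAddThree K * (Complex.cos (2 * K) + 3) = 1 := by
  have h : cos (2 * K) + 3 ≠ 0 := by linarith [neg_one_le_cos (2 * K)]
  rw [invCosTwoMulAddThree]
  exact_mod_cast congrArg ((↑) : ℝ → ℂ) (inv_mul_cancel₀ h)

lemma expCoeff_invCosTwoMulAddThree_recurrence (x : ℤ) :
    expCoeff invCosTwoMulAddThree (x + 2) + 6 * expCoeff invCosTwoMulAddThree x +
      expCoeff invCosTwoMulAddThree (x - 2) = if x = 0 then 4 * (π : ℂ) else 0 := by
  have hg := continuous_invCosTwoMulAddThree.intervalIntegrable (μ := volume) (-π) π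
  have hsum : (fun K : ℝ => invCosTwoMulAddThree K * Complex.cos (2 * K)) +
      (fun K => 3 * invCosTwoMulAddThree K) = 1 := by
    funext K
    simp only [Pi.add_apply, Pi.one_apply, mul_comm (3 : ℂ), ← mul_add, invCosTwoMulAddThree_mul]
  have h := congrArg (expCoeff · x) hsum
  rw [expCoeff_add (hg.mul_continuousOn (by fun_prop)) (hg.const_mul 3),
    expCoeff_mul_cos_two_mul hg, expCoeff_const_mul, expCoeff_one] at h
  split_ifs at h ⊢ <;> linear_combination 2 * h

lemma expCoeff_invCosTwoMulAddThree_zero :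
    expCoeff invCosTwoMulAddThree 0 = ((√2 * π / 2 : ℝ) : ℂ) := by
  have hsqrt : √((3 : ℝ) ^ 2 - 1) = 2 * √2 := by
    rw [show (3 : ℝ) ^ 2 - 1 = 2 ^ 2 * 2 by norm_num, sqrt_mul (by norm_num), sqrt_sq zero_le_two]
  have h := integral_inv_add_cos_two_mul (a := 3) (by norm_num)
  rw [hsqrt, show 2 * π / (2 * √2) = √2 * π / 2 by
    field_simp
    rw [sq_sqrt zero_le_two]] at h
  simp only [expCoeff, invCosTwoMulAddThree, Int.cast_zero, mul_zero, Complex.exp_zero, mul_one,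
    intervalIntegral.integral_ofReal, add_comm (cos _), h]

lemma expCoeff_invCosTwoMulAddThree_two_mul (m : ℤ) :
    expCoeff invCosTwoMulAddThree (2 * m) =
      ((√2 * π / 2 * (-(√2 - 1) ^ 2) ^ m.natAbs : ℝ) : ℂ) := by
  have hs : √2 ^ 2 = 2 := sq_sqrt zero_le_two
  set t : ℝ := -(√2 - 1) ^ 2 with ht
  have ht₀ : √2 * π / 2 * (2 * t + 6) = 4 * π := by
    rw [ht]
    linear_combination (2 * π - √2 * π) * hs
  have ht₁ : t ^ 2 + 6 * t + 1 = 0 := by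
    rw [ht]
    linear_combination (√2 ^ 2 - 4 * √2 + 2) * hs
  refine congrFun (Function.Even.eq_of_recurrence (a := 6)
    (u := fun m => expCoeff invCosTwoMulAddThree (2 * m))
    (v := fun m => ((√2 * π / 2 * t ^ m.natAbs : ℝ) : ℂ))
    (s := fun n => if n = 0 then 4 * (π : ℂ) else 0) ?_ ?_ ?_ ?_ ?_) m
  · intro m
    simp only [mul_neg, expCoeff_neg_of_even invCosTwoMulAddThree_even]
  · intro m
    simp only [Int.natAbs_neg]
  · intro n
    have h := expCoeff_invCosTwoMulAddThree_recurrence (2 * n)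
    rw [show (2 * n : ℤ) + 2 = 2 * (n + 1) by ring, show (2 * n : ℤ) - 2 = 2 * (n - 1) by ring] at h
    simpa using h
  · rintro (_ | k)
    · have h : √2 * π / 2 * t ^ 1 + 6 * (√2 * π / 2 * t ^ 0) + √2 * π / 2 * t ^ 1 = 4 * π := by
        linear_combination ht₀
      simpa using congrArg ((↑) : ℝ → ℂ) h
    · have h : √2 * π / 2 * t ^ (k + 2) + 6 * (√2 * π / 2 * t ^ (k + 1)) +
          √2 * π / 2 * t ^ k = 0 := by
        linear_combination √2 * π / 2 * t ^ k * ht₁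
      have habs₁ : ((k : ℤ) + 1).natAbs = k + 1 := by omega
      have habs₂ : ((k : ℤ) + 1 + 1).natAbs = k + 2 := by omega
      simpa [habs₁, habs₂] using congrArg ((↑) : ℝ → ℂ) h
  · simpa using expCoeff_invCosTwoMulAddThree_zero

lemma cos_int_mul_pi_eq_neg_one_pow_natAbs (m : ℤ) : cos (m * π) = (-1) ^ m.natAbs := by
  rw [← cos_abs, abs_mul, abs_of_pos pi_pos, ← Int.cast_abs, ← Int.natCast_natAbs,
    Int.cast_natCast, cos_nat_mul_pi]

lemma expCoeff_invCosTwoMulAddThree (x : ℤ) :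
    expCoeff invCosTwoMulAddThree x =
      ((√2 * π / 2 * (√2 - 1) ^ x.natAbs * cos (π * x / 2) : ℝ) : ℂ) := by
  obtain ⟨m, rfl | rfl⟩ := x.even_or_odd'
  · rw [expCoeff_invCosTwoMulAddThree_two_mul,
      show π * ((2 * m : ℤ) : ℝ) / 2 = m * π by push_cast; ring,
      cos_int_mul_pi_eq_neg_one_pow_natAbs, Int.natAbs_mul, pow_mul, neg_pow]
    norm_num
    ring
  · rw [expCoeff_eq_zero_of_odd invCosTwoMulAddThree_periodic ⟨m, rfl⟩,
      show π * ((2 * m + 1 : ℤ) : ℝ) / 2 = m * π + π / 2 by push_cast; ring, cos_add_pi_div_two,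
      sin_int_mul_pi]
    simp

lemma ofReal_neg_two_mul_cos_sq_div (K : ℝ) :
    ((-2 * cos K ^ 2 / (cos (2 * K) + 3) : ℝ) : ℂ) = -1 + 2 * invCosTwoMulAddThree K := by
  have h : cos (2 * K) + 3 ≠ 0 := by linarith [neg_one_le_cos (2 * K)]
  have h' : -2 * cos K ^ 2 / (cos (2 * K) + 3) = -1 + 2 * (cos (2 * K) + 3)⁻¹ := by
    field_simp
    linear_combination cos_two_mul K
  rw [h', invCosTwoMulAddThree]
  push_cast
  ring

/-- For every integer `x`,
`∫_{−π}^{π} (−2 cos²K/(cos 2K + 3)) e^{iKx} dK` equals `(√2 − 2)π` if `x = 0` and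
`√2 π (√2 − 1)^{|x|} cos(πx/2)` if `x ≠ 0`. -/
theorem stmt11 (x : ℤ) :
    (∫ K in (-Real.pi)..Real.pi,
        ((-2 * Real.cos K ^ 2 / (Real.cos (2 * K) + 3) : ℝ) : ℂ) *
          Complex.exp (Complex.I * (K : ℂ) * (x : ℂ))) =
      if x = 0 then (((Real.sqrt 2 - 2) * Real.pi : ℝ) : ℂ)
      else ((Real.sqrt 2 * Real.pi * (Real.sqrt 2 - 1) ^ x.natAbs *
              Real.cos (Real.pi * (x : ℝ) / 2) : ℝ) : ℂ) := by
  have hdecomp : (fun K : ℝ => ((-2 * cos K ^ 2 / (cos (2 * K) + 3) : ℝ) : ℂ)) =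
      (fun K => -1 * (1 : ℝ → ℂ) K) + fun K => 2 * invCosTwoMulAddThree K := by
    funext K
    simp only [ofReal_neg_two_mul_cos_sq_div, Pi.add_apply, Pi.one_apply]
    ring
  have hg := continuous_invCosTwoMulAddThree.intervalIntegrable (μ := volume) (-π) π
  have h1 : IntervalIntegrable (1 : ℝ → ℂ) volume (-π) π := intervalIntegrable_const
  change expCoeff _ x = _
  rw [hdecomp, expCoeff_add (h1.const_mul (-1)) (hg.const_mul 2), expCoeff_const_mul,
    expCoeff_const_mul, expCoeff_one, expCoeff_invCosTwoMulAddThree]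
  split_ifs with hx
  · subst hx
    simp
    ring
  · push_cast
    ring
end

section
/- (Lemma 2) Let n ≥ 2, let j : Fin n → Bool be a binary string, and let p, q ∈ Fin n be distinct positions with j(p) ≠ j(q). Then there exists a binary string i : Fin n → Bool such that, with ĩ = i ∘ (transposition of p and q), either c(ĩ, j) ≠ c(i, j) or d(ĩ, j) ≠ d(i, j). -/
/-- `c(i,j)`: number of positions where `i` and `j` are both `true`. -/
def cntC (n : ℕ) (i j : Fin n → Bool) : ℕ :=
  (Finset.univ.filter fun p : Fin n => i p = true ∧ j p = true).card

/-- `d(i,j)`: number of positions where `i` and `j` differ. -/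
def cntD (n : ℕ) (i j : Fin n → Bool) : ℕ :=
  (Finset.univ.filter fun p : Fin n => i p ≠ j p).card

/-- (Lemma 2) If `j` disagrees on two distinct positions `p, q`, then there is a string
`i` for which swapping `p` and `q` changes `c(i,j)` or `d(i,j)`. -/
theorem stmt14 (n : ℕ) (hn : 2 ≤ n) (j : Fin n → Bool) (p q : Fin n)
    (hne : p ≠ q) (hpq : j p ≠ j q) :
    ∃ i : Fin n → Bool,
      cntC n (i ∘ Equiv.swap p q) j ≠ cntC n i j ∨
      cntD n (i ∘ Equiv.swap p q) j ≠ cntD n i j := by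
  refine ⟨j, Or.inr ?_⟩
  have h1 : cntD n j j = 0 := by
    simp [cntD]
  have h2 : cntD n (j ∘ Equiv.swap p q) j ≠ 0 := by
    rw [cntD, ← Nat.pos_iff_ne_zero, Finset.card_pos]
    exact ⟨p, by simp [Equiv.swap_apply_left, Ne.symm hpq]⟩
  rw [h1]; exact h2
end

section
/- (Lemma 3) Let n ≥ 2, let k : Fin n → Bool, and let p, q be two distinct positions both different from the last position n−1. Then P(i ∘ (transposition of p and q), k) = P(i, k) holds for all binary strings i : Fin n → Bool if and only if k(p) = k(q). -/
/-- `c'(i,k)`: number of positions `p < n−1` with `i p = k p = true`. -/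
def cB (n : ℕ) (i k : Fin n → Bool) : ℕ :=
  (Finset.univ.filter fun p : Fin n => (p : ℕ) < n - 1 ∧ i p = true ∧ k p = true).card

/-- `d'(i,k)`: number of positions `p < n−1` with `i p ≠ k p`. -/
def dB (n : ℕ) (i k : Fin n → Bool) : ℕ :=
  (Finset.univ.filter fun p : Fin n => (p : ℕ) < n - 1 ∧ i p ≠ k p).card

/-- Numerical value (`0` or `1`) of the last bit of `i`. -/
def lastBit (n : ℕ) (i : Fin n → Bool) : ℕ :=
  (Finset.univ.filter fun p : Fin n => (p : ℕ) = n - 1 ∧ i p = true).card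

/-- `P(i,k) = (−1)^{c'(i,k)}·F(d'(i,k) − 1 + a + b)` where `a, b` are the last bits of
`i` and `k`. -/
noncomputable def Pb (n : ℕ) (i k : Fin n → Bool) : ℝ :=
  (-1 : ℝ) ^ cB n i k * Ffun ((dB n i k : ℤ) - 1 + (lastBit n i : ℤ) + (lastBit n k : ℤ))

lemma sq2 : Real.sqrt 2 ^ 2 = 2 := Real.sq_sqrt (by norm_num)
lemma sq2_gt : 1 < Real.sqrt 2 := by
  nlinarith [Real.sqrt_nonneg 2, sq2]

lemma Ffun_neg_one : Ffun (-1) = 1 := by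
  have h1 : (1 : ℝ) + Real.sqrt 2 ≠ 0 := by nlinarith [sq2_gt]
  have h2 : (1 : ℝ) - Real.sqrt 2 ≠ 0 := by nlinarith [sq2_gt]
  have h3 : Real.sqrt 2 ≠ 0 := by nlinarith [sq2_gt]
  unfold Ffun
  rw [show (-1 : ℤ) = -(1:ℤ) by ring, zpow_neg, zpow_neg, zpow_one, zpow_one]
  field_simp
  linear_combination (2*Real.sqrt 2) * sq2

lemma Ffun_zero : Ffun 0 = 0 := by simp [Ffun]

lemma Ffun_nat (m : ℕ) : Ffun m = ((1 + Real.sqrt 2) ^ m - (1 - Real.sqrt 2) ^ m) / (2 * Real.sqrt 2) := by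
  simp [Ffun, zpow_natCast]

lemma Ffun_two : Ffun 2 = 2 := by
  have h3 : (0:ℝ) < Real.sqrt 2 := by nlinarith [sq2_gt]
  rw [show (2:ℤ) = ((2:ℕ):ℤ) by norm_num, Ffun_nat]
  field_simp
  ring_nf

lemma Ffun_nat_pos (m : ℕ) (hm : 1 ≤ m) : 0 < Ffun m := by
  rw [Ffun_nat]
  have h0 : (0:ℝ) ≤ Real.sqrt 2 - 1 := by nlinarith [sq2_gt]
  have hlt : (Real.sqrt 2 - 1) ^ m < (1 + Real.sqrt 2) ^ m := by
    apply pow_lt_pow_left₀ (by nlinarith [sq2_gt]) h0 (by omega)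
  have habs : (1 - Real.sqrt 2) ^ m ≤ (Real.sqrt 2 - 1) ^ m := by
    calc (1 - Real.sqrt 2) ^ m ≤ |(1 - Real.sqrt 2) ^ m| := le_abs_self _
    _ = |1 - Real.sqrt 2| ^ m := by rw [abs_pow]
    _ = (Real.sqrt 2 - 1) ^ m := by rw [abs_of_nonpos (by nlinarith [sq2_gt])]; ring_nf
  exact div_pos (by linarith) (by nlinarith [sq2_gt])

lemma Ffun_pos (t : ℤ) (ht : 1 ≤ t) : 0 < Ffun t := by
  obtain ⟨m, rfl⟩ : ∃ m : ℕ, t = m := ⟨t.toNat, (Int.toNat_of_nonneg (by omega)).symm⟩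
  exact Ffun_nat_pos m (by exact_mod_cast ht)

lemma Ffun_sum_pos (t : ℤ) (ht : -1 ≤ t) : 0 < Ffun t + Ffun (t + 2) := by
  rcases eq_or_lt_of_le ht with h | h
  · rw [← h]; rw [Ffun_neg_one]; norm_num [Ffun_pos 1 le_rfl]
    have := Ffun_pos 1 le_rfl; norm_num at this ⊢; linarith
  · rcases eq_or_lt_of_le (show (0:ℤ) ≤ t by omega) with h0 | h0
    · rw [← h0, Ffun_zero]; rw [show (0:ℤ)+2 = 2 by ring, Ffun_two]; norm_num
    · have := Ffun_pos t (by omega)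
      have := Ffun_pos (t+2) (by omega)
      linarith

section Aux
variable {n : ℕ} {k : Fin n → Bool} {p q : Fin n}

lemma swap_val_lt (hp : (p:ℕ) < n - 1) (hq : (q:ℕ) < n - 1) (r : Fin n) :
    ((Equiv.swap p q r : Fin n) : ℕ) < n - 1 ↔ (r : ℕ) < n - 1 := by
  rcases eq_or_ne r p with rfl | hrp
  · simp [Equiv.swap_apply_left, hp, hq]
  · rcases eq_or_ne r q with rfl | hrq
    · simp [Equiv.swap_apply_right, hp, hq]
    · rw [Equiv.swap_apply_of_ne_of_ne hrp hrq]

lemma k_swap (hk : k p = k q) (r : Fin n) : k (Equiv.swap p q r) = k r := by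
  rcases eq_or_ne r p with rfl | hrp
  · simp [Equiv.swap_apply_left, hk]
  · rcases eq_or_ne r q with rfl | hrq
    · simp [Equiv.swap_apply_right, hk]
    · rw [Equiv.swap_apply_of_ne_of_ne hrp hrq]

lemma cB_swap (hp : (p:ℕ) < n - 1) (hq : (q:ℕ) < n - 1) (hk : k p = k q)
    (i : Fin n → Bool) : cB n (i ∘ Equiv.swap p q) k = cB n i k := by
  unfold cB
  apply Finset.card_equiv (Equiv.swap p q)
  intro r
  simp only [Finset.mem_filter, Finset.mem_univ, true_and, Function.comp_apply]
  rw [swap_val_lt hp hq, k_swap hk]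

lemma dB_swap (hp : (p:ℕ) < n - 1) (hq : (q:ℕ) < n - 1) (hk : k p = k q)
    (i : Fin n → Bool) : dB n (i ∘ Equiv.swap p q) k = dB n i k := by
  unfold dB
  apply Finset.card_equiv (Equiv.swap p q)
  intro r
  simp only [Finset.mem_filter, Finset.mem_univ, true_and, Function.comp_apply]
  rw [swap_val_lt hp hq, k_swap hk]

lemma lastBit_swap (hp : (p:ℕ) < n - 1) (hq : (q:ℕ) < n - 1)
    (i : Fin n → Bool) : lastBit n (i ∘ Equiv.swap p q) = lastBit n i := by
  unfold lastBit
  congr 1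
  apply Finset.filter_congr
  intro r _
  constructor <;> intro ⟨h1, h2⟩ <;> refine ⟨h1, ?_⟩ <;>
    [skip; skip] <;>
    · have hrp : r ≠ p := fun e => by subst e; omega
      have hrq : r ≠ q := fun e => by subst e; omega
      simpa [Function.comp_apply, Equiv.swap_apply_of_ne_of_ne hrp hrq] using h2
end Aux

section Aux2
variable {n : ℕ} {k : Fin n → Bool} {p q : Fin n}

lemma forward_aux (hne : p ≠ q) (hp : (p:ℕ) < n - 1) (hq : (q:ℕ) < n - 1)
    (hkp : k p = true) (hkq : k q = false)
    (h : ∀ i : Fin n → Bool, Pb n (i ∘ Equiv.swap p q) k = Pb n i k) : False := by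
  set i0 : Fin n → Bool := fun r => decide (r = p) with hi0
  set i1 : Fin n → Bool := fun r => decide (r = q) with hi1
  have hcomp : i0 ∘ Equiv.swap p q = i1 := by
    funext r
    simp only [hi0, hi1, Function.comp_apply]
    rw [decide_eq_decide, Equiv.apply_eq_iff_eq_symm_apply]
    simp [Equiv.symm_swap, Equiv.swap_apply_left]
  have hlast0 : lastBit n i0 = 0 := by
    rw [lastBit, Finset.card_eq_zero, Finset.filter_eq_empty_iff]
    rintro r - ⟨h1, h2⟩
    rw [hi0, decide_eq_true_eq] at h2
    subst h2; omega
  have hlast1 : lastBit n i1 = 0 := by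
    rw [lastBit, Finset.card_eq_zero, Finset.filter_eq_empty_iff]
    rintro r - ⟨h1, h2⟩
    rw [hi1, decide_eq_true_eq] at h2
    subst h2; omega
  have hc0 : cB n i0 k = 1 := by
    rw [cB, show (Finset.univ.filter fun r : Fin n =>
        (r : ℕ) < n - 1 ∧ i0 r = true ∧ k r = true) = {p} from ?_, Finset.card_singleton]
    ext r
    simp only [Finset.mem_filter, Finset.mem_univ, true_and, Finset.mem_singleton, hi0,
      decide_eq_true_eq]
    constructor
    · rintro ⟨-, rfl, -⟩; rfl
    · rintro rfl; exact ⟨hp, rfl, hkp⟩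
  have hc1 : cB n i1 k = 0 := by
    rw [cB, Finset.card_eq_zero, Finset.filter_eq_empty_iff]
    rintro r - ⟨-, h2, h3⟩
    rw [hi1, decide_eq_true_eq] at h2
    subst h2
    rw [hkq] at h3; exact absurd h3 (by simp)
  set M : Finset (Fin n) :=
    Finset.univ.filter (fun r : Fin n => (r:ℕ) < n - 1 ∧ r ≠ p ∧ r ≠ q ∧ k r = true) with hM
  have hd0 : dB n i0 k = M.card := by
    rw [dB]
    congr 1
    ext r
    simp only [Finset.mem_filter, Finset.mem_univ, true_and, hM, hi0, ne_eq]
    rcases eq_or_ne r p with rfl | hrp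
    · simp [hkp]
    · rcases eq_or_ne r q with rfl | hrq
      · simp [hkq, hrp]
      · cases hkr : k r <;> simp [hrp, hrq, hkr]
  have hd1 : dB n i1 k = M.card + 2 := by
    have hset : (Finset.univ.filter fun r : Fin n => (r : ℕ) < n - 1 ∧ i1 r ≠ k r)
        = insert p (insert q M) := by
      ext r
      simp only [Finset.mem_filter, Finset.mem_univ, true_and, hM, hi1, ne_eq,
        Finset.mem_insert]
      rcases eq_or_ne r p with rfl | hrp
      · simp [hkp, hp, hne]
      · rcases eq_or_ne r q with rfl | hrq
        · simp [hkq, hq]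
        · cases hkr : k r <;> simp [hrp, hrq, hkr]
    have hqM : q ∉ M := by simp [hM]
    have hpM : p ∉ insert q M := by simp [hM, hne]
    rw [dB, hset, Finset.card_insert_of_notMem hpM, Finset.card_insert_of_notMem hqM]
  set b : ℤ := (lastBit n k : ℤ) with hb
  set t : ℤ := (M.card : ℤ) - 1 + b with ht
  have e := h i0
  rw [hcomp] at e
  have key : Ffun (t + 2) = - Ffun t := by
    have h1 : ((dB n i1 k : ℤ) - 1 + (lastBit n i1 : ℤ) + (lastBit n k : ℤ)) = t + 2 := by
      rw [hd1, hlast1, ht]; push_cast; ring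
    have h2 : ((dB n i0 k : ℤ) - 1 + (lastBit n i0 : ℤ) + (lastBit n k : ℤ)) = t := by
      rw [hd0, hlast0, ht]; push_cast; ring
    rw [Pb, Pb, h1, h2, hc0, hc1] at e
    simpa using e
  have hpos := Ffun_sum_pos t (by rw [ht, hb]; omega)
  linarith
end Aux2

/-- (Lemma 3) For distinct positions `p, q` both different from the last position,
`P(i ∘ swap p q, k) = P(i, k)` holds for all `i` iff `k p = k q`. -/
theorem stmt15 (n : ℕ) (hn : 2 ≤ n) (k : Fin n → Bool) (p q : Fin n)
    (hne : p ≠ q) (hp : (p : ℕ) ≠ n - 1) (hq : (q : ℕ) ≠ n - 1) :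
    (∀ i : Fin n → Bool, Pb n (i ∘ Equiv.swap p q) k = Pb n i k) ↔ k p = k q := by
  have hp' : (p : ℕ) < n - 1 := by have := p.isLt; omega
  have hq' : (q : ℕ) < n - 1 := by have := q.isLt; omega
  constructor
  · intro h
    by_contra hkk
    cases hkp : k p <;> cases hkq : k q
    · exact hkk (hkp.trans hkq.symm)
    · have h' : ∀ i : Fin n → Bool, Pb n (i ∘ Equiv.swap q p) k = Pb n i k := by
        intro i; rw [Equiv.swap_comm]; exact h i
      exact forward_aux hne.symm hq' hp' hkq hkp h'
    · exact forward_aux hne hp' hq' hkp hkq h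
    · exact hkk (hkp.trans hkq.symm)
  · intro hk i
    rw [Pb, Pb, cB_swap hp' hq' hk i, dB_swap hp' hq' hk i, lastBit_swap hp' hq' i]
end

section
/- (Lemma 4) Let n ≥ 2, let k : Fin n → Bool, and let p be a position different from the last position n−1. Then P(i ∘ (transposition of p and n−1), k) = P(i, k) holds for all binary strings i : Fin n → Bool if and only if k(p) = false. -/
lemma sqrt2_pos' : (0:ℝ) < Real.sqrt 2 := Real.sqrt_pos.mpr (by norm_num)
lemma sqrt2_sq' : (Real.sqrt 2)^2 = 2 := Real.sq_sqrt (by norm_num)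

lemma Ffun_one : Ffun 1 = 1 := by
  have h0 := sqrt2_pos'
  simp only [Ffun, zpow_one]
  field_simp
  ring

/-- (Lemma 4) For a position `p` different from the last position `n−1`,
`P(i ∘ swap p (n−1), k) = P(i, k)` holds for all `i` iff `k (n−1) = false`. -/
theorem stmt16 (n : ℕ) (hn : 2 ≤ n) (k : Fin n → Bool) (p : Fin n)
    (hp : (p : ℕ) ≠ n - 1) :
    (∀ i : Fin n → Bool,
        Pb n (i ∘ Equiv.swap p (⟨n - 1, by omega⟩ : Fin n)) k = Pb n i k) ↔
      k p = false := by
  set L : Fin n := ⟨n - 1, by omega⟩ with hLdef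
  have hLv : (L : ℕ) = n - 1 := rfl
  have hpL : p ≠ L := fun h => hp (by rw [h, hLv])
  have hpn : (p : ℕ) < n - 1 := by have := p.isLt; omega
  have hne : ∀ q : Fin n, (q : ℕ) < n - 1 → q ≠ L := by
    intro q hq hql
    rw [hql, hLv] at hq; omega
  constructor
  · -- hard direction: ∀ i, equality → k p = false
    intro h
    by_contra hkp
    rw [Bool.not_eq_false] at hkp
    set i : Fin n → Bool := fun q => if q = L then false else k q with hidef
    have hiL : i L = false := by simp [hidef]
    have hiq : ∀ q, q ≠ L → i q = k q := fun q hq => by simp [hidef, hq]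
    have hip : i p = true := by rw [hiq p hpL, hkp]
    have hswL : (i ∘ Equiv.swap p L) L = true := by
      simp [Function.comp, Equiv.swap_apply_right, hip]
    have hswp : (i ∘ Equiv.swap p L) p = false := by
      simp [Function.comp, Equiv.swap_apply_left, hiL]
    have hswq : ∀ q, q ≠ p → q ≠ L → (i ∘ Equiv.swap p L) q = i q := fun q h1 h2 => by
      simp [Function.comp, Equiv.swap_apply_of_ne_of_ne h1 h2]
    have hd : dB n i k = 0 := by
      unfold dB
      rw [Finset.card_eq_zero, Finset.filter_eq_empty_iff]
      rintro q _ ⟨hq1, hq2⟩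
      exact hq2 (hiq q (hne q hq1))
    have hd' : dB n (i ∘ Equiv.swap p L) k = 1 := by
      unfold dB
      have hset : (Finset.univ.filter fun q : Fin n =>
          (q : ℕ) < n - 1 ∧ (i ∘ Equiv.swap p L) q ≠ k q) = {p} := by
        ext q
        simp only [Finset.mem_filter, Finset.mem_univ, true_and, Finset.mem_singleton]
        constructor
        · rintro ⟨h1, h2⟩
          by_contra hqp
          exact h2 (by rw [hswq q hqp (hne q h1), hiq q (hne q h1)])
        · rintro rfl
          exact ⟨hpn, by rw [hswp, hkp]; simp⟩
      rw [hset, Finset.card_singleton]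
    have hlast : ∀ j : Fin n → Bool, lastBit n j = if j L = true then 1 else 0 := by
      intro j
      unfold lastBit
      have hset : (Finset.univ.filter fun q : Fin n => (q : ℕ) = n - 1 ∧ j q = true)
          = if j L = true then {L} else ∅ := by
        split_ifs with hj
        · ext q
          simp only [Finset.mem_filter, Finset.mem_univ, true_and, Finset.mem_singleton]
          constructor
          · rintro ⟨h1, _⟩; exact Fin.ext (by rw [h1, hLv])
          · rintro rfl; exact ⟨hLv, hj⟩
        · rw [Finset.filter_eq_empty_iff]
          rintro q _ ⟨h1, h2⟩
          exact hj (by rwa [show q = L from Fin.ext (by rw [h1, hLv])] at h2)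
      rw [hset]; split_ifs <;> simp
    have hc : cB n i k = cB n (i ∘ Equiv.swap p L) k + 1 := by
      unfold cB
      have hmem : p ∈ Finset.univ.filter
          (fun q : Fin n => (q : ℕ) < n - 1 ∧ i q = true ∧ k q = true) := by
        simp [hpn, hip, hkp]
      have hpos : 0 < (Finset.univ.filter
          (fun q : Fin n => (q : ℕ) < n - 1 ∧ i q = true ∧ k q = true)).card :=
        Finset.card_pos.mpr ⟨p, hmem⟩
      have hset : (Finset.univ.filter fun q : Fin n =>
            (q : ℕ) < n - 1 ∧ (i ∘ Equiv.swap p L) q = true ∧ k q = true)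
          = (Finset.univ.filter fun q : Fin n =>
            (q : ℕ) < n - 1 ∧ i q = true ∧ k q = true).erase p := by
        ext q
        simp only [Finset.mem_filter, Finset.mem_univ, true_and, Finset.mem_erase]
        constructor
        · rintro ⟨h1, h2, h3⟩
          have hqp : q ≠ p := by
            rintro rfl
            rw [hswp] at h2
            exact absurd h2 (by simp)
          exact ⟨hqp, h1, by rwa [← hswq q hqp (hne q h1)], h3⟩
        · rintro ⟨hqp, h1, h2, h3⟩
          exact ⟨h1, by rwa [hswq q hqp (hne q h1)], h3⟩
      rw [hset, Finset.card_erase_of_mem hmem]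
      omega
    have heq := h i
    simp only [Pb] at heq
    rw [hd, hd', hc, hlast i, hlast (i ∘ Equiv.swap p L), hlast k, hiL, hswL] at heq
    have hx : ((-1 : ℝ)) ^ (cB n (i ∘ Equiv.swap p L) k) ≠ 0 := pow_ne_zero _ (by norm_num)
    cases hkL : k L with
    | false =>
      rw [hkL] at heq
      norm_num at heq
      rw [Ffun_one, Ffun_neg_one, pow_succ] at heq
      ring_nf at heq
      exact hx (by linarith)
    | true =>
      rw [hkL] at heq
      norm_num at heq
      rw [Ffun_two, Ffun_zero, pow_succ] at heq
      ring_nf at heq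
      exact hx (by linarith)
  · -- easy direction
    intro hkp i
    have hc : cB n (i ∘ Equiv.swap p L) k = cB n i k := by
      unfold cB
      apply congrArg Finset.card
      apply Finset.filter_congr
      intro q _
      rcases eq_or_ne q p with rfl | hqp
      · simp [hkp]
      rcases eq_or_ne q L with rfl | hqL
      · simp [hLv]
      · simp [Function.comp, Equiv.swap_apply_of_ne_of_ne hqp hqL]
    have hda : dB n (i ∘ Equiv.swap p L) k + lastBit n (i ∘ Equiv.swap p L)
        = dB n i k + lastBit n i := by
      unfold dB lastBit
      rw [Finset.card_filter, Finset.card_filter, Finset.card_filter, Finset.card_filter,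
        ← Finset.sum_add_distrib, ← Finset.sum_add_distrib]
      refine Fintype.sum_equiv (Equiv.swap p L) _ _ ?_
      intro q
      rcases eq_or_ne q p with rfl | hqp
      · rw [Equiv.swap_apply_left]
        simp only [Function.comp_apply, Equiv.swap_apply_left]
        cases hiL : i L <;>
          simp [hpn, hp, hLv, hkp, hiL]
      rcases eq_or_ne q L with rfl | hqL
      · rw [Equiv.swap_apply_right]
        simp only [Function.comp_apply, Equiv.swap_apply_right]
        cases hipv : i p <;>
          simp [hpn, hp, hLv, hkp, hipv]
      · rw [Equiv.swap_apply_of_ne_of_ne hqp hqL]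
        simp [Function.comp, Equiv.swap_apply_of_ne_of_ne hqp hqL]
    have hexp : ((dB n (i ∘ Equiv.swap p L) k : ℤ)) - 1 + (lastBit n (i ∘ Equiv.swap p L) : ℤ)
          + (lastBit n k : ℤ)
        = (dB n i k : ℤ) - 1 + (lastBit n i : ℤ) + (lastBit n k : ℤ) := by omega
    simp only [Pb]
    rw [hc, hexp]
end
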